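/- arXiv:2209.07317 — 6 statements merged into one kernel-verified Lean document; each statement's English description precedes it below -/
import Mathlib

section
/- Let G be a difference graph with signature S and labeling f, and let v be the vertex with the maximum label s = max S. Then the degree of v is odd if and only if v is adjacent to a vertex labeled s/2 (in particular s is even in that case). -/
/-- Corollary 3.1(iv): the degree of the vertex with the maximum label `s` is odd
iff it is adjacent to a vertex labeled `s/2`. -/
theorem stmt_3 {V : Type*} [Fintype V] [DecidableEq V] (G : SimpleGraph V)
    [DecidableRel G.Adj] (S : Finset ℕ) (hS : S.Nonempty) (f : V → ℕ)
    (hpos : ∀ s ∈ S, 0 < s)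
    (hmem : ∀ v, f v ∈ S) (hinj : Function.Injective f)
    (hsurj : ∀ s ∈ S, ∃ v, f v = s)
    (hadj : ∀ x y, G.Adj x y ↔ ((f x : ℤ) - (f y : ℤ)).natAbs ∈ S)
    (v : V) (hv : f v = S.max' hS) :
    Odd (G.degree v) ↔ ∃ u, G.Adj v u ∧ 2 * f u = S.max' hS := by
  classical
  set s := S.max' hS with hs
  -- basic facts about neighbors
  have hub : ∀ u, G.Adj v u → f u < s := by
    intro u hu
    have h1 : f u ≤ s := S.le_max' _ (hmem u)
    have h2 : f u ≠ s := fun h => hu.ne' (hinj (h.trans hv.symm))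
    omega
  have hmemS : ∀ u, G.Adj v u → s - f u ∈ S := by
    intro u hu
    have h := (hadj v u).mp hu
    have hlt := hub u hu
    have : ((f v : ℤ) - (f u : ℤ)).natAbs = s - f u := by
      rw [hv]; omega
    rwa [this] at h
  -- the partner of a neighbor
  have key : ∀ u, G.Adj v u → ∀ w, f w = s - f u → G.Adj v w := by
    intro u hu w hw
    rw [hadj]
    have hlt := hub u hu
    have : ((f v : ℤ) - (f w : ℤ)).natAbs = f u := by
      rw [hv, hw]; omega
    rw [this]; exact hmem u
  set N := G.neighborFinset v with hN
  set P := N.filter (fun u => 2 * f u = s) with hP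
  set Q := N.filter (fun u => ¬ (2 * f u = s)) with hQ
  have hcard : P.card + Q.card = N.card := Finset.card_filter_add_card_filter_not _
  -- Q has even cardinality via the involution u ↦ (vertex labeled s - f u)
  have hQeven : Even Q.card := by
    have hadjQ : ∀ u ∈ Q, G.Adj v u := by
      intro u hu
      rw [hQ, Finset.mem_filter, hN, SimpleGraph.mem_neighborFinset] at hu
      exact hu.1
    set g : ∀ u ∈ Q, V := fun u hu =>
      Classical.choose (hsurj (s - f u) (hmemS u (hadjQ u hu))) with hg
    have hgf : ∀ u (hu : u ∈ Q), f (g u hu) = s - f u := fun u hu =>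
      Classical.choose_spec (hsurj (s - f u) (hmemS u (hadjQ u hu)))
    have hgmem : ∀ u (hu : u ∈ Q), g u hu ∈ Q := by
      intro u hu
      have hadj' := key u (hadjQ u hu) _ (hgf u hu)
      rw [hQ, Finset.mem_filter, hN, SimpleGraph.mem_neighborFinset]
      refine ⟨hadj', ?_⟩
      rw [hgf u hu]
      have h1 := hub u (hadjQ u hu)
      have h2 : ¬ (2 * f u = s) := by
        have := (Finset.mem_filter.mp hu).2
        simpa using this
      omega
    have hzero : ∑ u ∈ Q, (1 : ZMod 2) = 0 := by
      refine Finset.sum_involution g (fun a ha => ?_) (fun a ha _ => ?_) hgmem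
        (fun a ha => ?_)
      · decide
      · intro h
        have := hgf a ha
        rw [h] at this
        have h1 := hub a (hadjQ a ha)
        have h2 : ¬ (2 * f a = s) := by
          have := (Finset.mem_filter.mp ha).2
          simpa using this
        omega
      · apply hinj
        rw [hgf _ (hgmem a ha), hgf a ha]
        have h1 := hub a (hadjQ a ha)
        omega
    have : ((Q.card : ℕ) : ZMod 2) = 0 := by
      rw [← hzero]; simp
    have := (ZMod.natCast_eq_zero_iff _ 2).mp this
    exact even_iff_two_dvd.mpr this
  -- P has at most one element
  have hPle : P.card ≤ 1 := by
    apply Finset.card_le_one.mpr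
    intro a ha b hb
    have ha' := (Finset.mem_filter.mp ha).2
    have hb' := (Finset.mem_filter.mp hb).2
    exact hinj (by omega)
  have hdeg : G.degree v = N.card := rfl
  constructor
  · intro hodd
    rw [hdeg, ← hcard] at hodd
    have hPodd : Odd P.card := by
      rcases hQeven with ⟨k, hk⟩
      rcases hodd with ⟨m, hm⟩
      exact ⟨m - k, by omega⟩
    have hP1 : P.card = 1 := by
      rcases hPodd with ⟨m, hm⟩; omega
    obtain ⟨u, hu⟩ := Finset.card_eq_one.mp hP1
    have huP : u ∈ P := hu ▸ Finset.mem_singleton_self u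
    rw [hP, Finset.mem_filter, hN, SimpleGraph.mem_neighborFinset] at huP
    exact ⟨u, huP.1, huP.2⟩
  · rintro ⟨u, hu, hu2⟩
    have huP : u ∈ P := by
      rw [hP, Finset.mem_filter, hN, SimpleGraph.mem_neighborFinset]
      exact ⟨hu, hu2⟩
    have hP1 : P.card = 1 :=
      le_antisymm hPle (Finset.card_pos.mpr ⟨u, huP⟩)
    rw [hdeg, ← hcard, hP1]
    rcases hQeven with ⟨k, hk⟩
    exact ⟨k, by omega⟩
end

section
/- The butterfly graph B(n, m), consisting of a central vertex w₀ adjacent to all vertices of a path w₁, u₀, u₁, ..., u_n and to all vertices of a path v₀, v₁, ..., v_m, is a difference graph. The labeling f(w₀) = 6, f(w₁) = 2, f(u_i) = 4 + 6i for 0 ≤ i ≤ n, f(v_j) = 3 + 6j for 0 ≤ j ≤ m is a valid difference labeling: every edge has label difference in the label set, and every non-adjacent pair has label difference outside the label set. -/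
/-- Directed edge relation of the butterfly graph: `Sum.inl false = w₀`,
`Sum.inl true = w₁`, `Sum.inr (Sum.inl i) = uᵢ`, `Sum.inr (Sum.inr j) = vⱼ`. -/
def butterflyRel (n m : ℕ) :
    (Bool ⊕ (Fin (n + 1) ⊕ Fin (m + 1))) →
    (Bool ⊕ (Fin (n + 1) ⊕ Fin (m + 1))) → Prop
  | Sum.inl false, z => z ≠ Sum.inl false
  | Sum.inl true, Sum.inr (Sum.inl i) => (i : ℕ) = 0
  | Sum.inr (Sum.inl i), Sum.inr (Sum.inl i') => (i' : ℕ) = (i : ℕ) + 1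
  | Sum.inr (Sum.inr j), Sum.inr (Sum.inr j') => (j' : ℕ) = (j : ℕ) + 1
  | _, _ => False

/-- Adjacency in the butterfly graph (symmetrization of `butterflyRel`). -/
def butterflyAdj (n m : ℕ) (x y : Bool ⊕ (Fin (n + 1) ⊕ Fin (m + 1))) : Prop :=
  butterflyRel n m x y ∨ butterflyRel n m y x

/-- The labeling of the butterfly graph: `w₀ ↦ 6`, `w₁ ↦ 2`, `uᵢ ↦ 4 + 6i`,
`vⱼ ↦ 3 + 6j`. -/
def butterflyLabel (n m : ℕ) : (Bool ⊕ (Fin (n + 1) ⊕ Fin (m + 1))) → ℕ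
  | Sum.inl false => 6
  | Sum.inl true => 2
  | Sum.inr (Sum.inl i) => 4 + 6 * (i : ℕ)
  | Sum.inr (Sum.inr j) => 3 + 6 * (j : ℕ)

lemma butterfly_mem_range_iff (n m d : ℕ) :
    d ∈ Set.range (butterflyLabel n m) ↔
      d = 6 ∨ d = 2 ∨ (∃ i ≤ n, d = 4 + 6 * i) ∨ (∃ j ≤ m, d = 3 + 6 * j) := by
  constructor
  · rintro ⟨b | i | j, rfl⟩
    · cases b
      · exact Or.inl rfl
      · exact Or.inr (Or.inl rfl)
    · exact Or.inr (Or.inr (Or.inl ⟨i, by omega, rfl⟩))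
    · exact Or.inr (Or.inr (Or.inr ⟨j, by omega, rfl⟩))
  · rintro (rfl | rfl | ⟨i, hi, rfl⟩ | ⟨j, hj, rfl⟩)
    · exact ⟨Sum.inl false, rfl⟩
    · exact ⟨Sum.inl true, rfl⟩
    · exact ⟨Sum.inr (Sum.inl ⟨i, by omega⟩), rfl⟩
    · exact ⟨Sum.inr (Sum.inr ⟨j, by omega⟩), rfl⟩

/-- The butterfly graph is a difference graph via the labeling above. -/
theorem stmt_7 (n m : ℕ) :
    Function.Injective (butterflyLabel n m) ∧
    ∀ x y, x ≠ y →
      (butterflyAdj n m x y ↔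
        ((butterflyLabel n m x : ℤ) - (butterflyLabel n m y : ℤ)).natAbs ∈
          Set.range (butterflyLabel n m)) := by
  constructor
  · rintro (b | i | j) (b' | i' | j') h <;>
      first
      | (cases b <;> cases b' <;> simp [butterflyLabel] at h ⊢)
      | (cases b <;> simp [butterflyLabel] at h <;> omega)
      | (cases b' <;> simp [butterflyLabel] at h <;> omega)
      | (simp [butterflyLabel] at h ⊢; exact Fin.ext (by omega))
      | (simp [butterflyLabel] at h; omega)
  · rintro (b | i | j) (b' | i' | j') hxy <;>
      [cases b <;> cases b'; cases b; cases b; cases b'; skip; skip; cases b'; skip; skip] <;>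
      simp only [butterflyAdj, butterflyRel, butterflyLabel, butterfly_mem_range_iff,
        ne_eq, or_false, false_or, not_false_iff, reduceCtorEq]
    -- w₀, w₀
    · exact absurd rfl hxy
    -- w₀, w₁
    · exact iff_of_true (by simp) (Or.inr (Or.inr (Or.inl ⟨0, Nat.zero_le _, by omega⟩)))
    -- w₁, w₀
    · exact iff_of_true (by simp) (Or.inr (Or.inr (Or.inl ⟨0, Nat.zero_le _, by omega⟩)))
    -- w₁, w₁
    · exact absurd rfl hxy
    -- w₀, uᵢ
    · have hlt := i'.isLt
      refine iff_of_true trivial ?_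
      rcases Nat.eq_zero_or_pos (i' : ℕ) with h | h
      · exact Or.inr (Or.inl (by omega))
      · exact Or.inr (Or.inr (Or.inl ⟨(i' : ℕ) - 1, by omega, by omega⟩))
    -- w₁, uᵢ
    · constructor
      · intro h0
        exact Or.inr (Or.inl (by omega))
      · rintro (h | h | ⟨k, hk, h⟩ | ⟨k, hk, h⟩) <;> omega
    -- w₀, vⱼ
    · have hlt := j'.isLt
      exact iff_of_true trivial
        (Or.inr (Or.inr (Or.inr ⟨(j' : ℕ) - 1, by omega, by omega⟩)))
    -- w₁, vⱼ
    · simp only [false_iff]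
      rintro (h | h | ⟨k, hk, h⟩ | ⟨k, hk, h⟩) <;> omega
    -- uᵢ, w₀
    · have hlt := i.isLt
      refine iff_of_true (by simp) ?_
      rcases Nat.eq_zero_or_pos (i : ℕ) with h | h
      · exact Or.inr (Or.inl (by omega))
      · exact Or.inr (Or.inr (Or.inl ⟨(i : ℕ) - 1, by omega, by omega⟩))
    -- uᵢ, w₁
    · constructor
      · intro h0
        exact Or.inr (Or.inl (by omega))
      · rintro (h | h | ⟨k, hk, h⟩ | ⟨k, hk, h⟩) <;> omega
    -- uᵢ, uᵢ'
    · constructor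
      · rintro (h | h) <;> exact Or.inl (by omega)
      · rintro (h | h | ⟨k, hk, h⟩ | ⟨k, hk, h⟩) <;> omega
    -- uᵢ, vⱼ
    · simp only [false_iff]
      rintro (h | h | ⟨k, hk, h⟩ | ⟨k, hk, h⟩) <;> omega
    -- vⱼ, w₀
    · have hlt := j.isLt
      exact iff_of_true (by simp)
        (Or.inr (Or.inr (Or.inr ⟨(j : ℕ) - 1, by omega, by omega⟩)))
    -- vⱼ, w₁
    · simp only [false_iff]
      rintro (h | h | ⟨k, hk, h⟩ | ⟨k, hk, h⟩) <;> omega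
    -- vⱼ, uᵢ
    · simp only [false_iff]
      rintro (h | h | ⟨k, hk, h⟩ | ⟨k, hk, h⟩) <;> omega
    -- vⱼ, vⱼ'
    · constructor
      · rintro (h | h) <;> exact Or.inl (by omega)
      · rintro (h | h | ⟨k, hk, h⟩ | ⟨k, hk, h⟩) <;> omega
end

section
/- For n ≥ 3, the Cₙ-snake with k blocks is a difference graph via the labeling f(x_i) = 2^j · (1 + 2^{n−2})^{⌊i/(n−1)⌋} for i = 0, 1, ..., k(n−1), where j = i mod (n−1): this labeling is injective, adjacent vertices have label difference in the label set, and non-adjacent vertices have label difference outside the label set. -/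
/-- Directed edge relation of the `Cₙ`-snake with `k` blocks on vertices
`x₀, …, x_{k(n−1)}`: consecutive vertices are adjacent (the path edges of each
block's cycle), and each block is closed by the edge
`x_{m(n−1)} x_{(m+1)(n−1)}`. -/
def cnSnakeRel (n k : ℕ) (a b : Fin (k * (n - 1) + 1)) : Prop :=
  (b : ℕ) = (a : ℕ) + 1 ∨
    ∃ m < k, (a : ℕ) = m * (n - 1) ∧ (b : ℕ) = (m + 1) * (n - 1)

/-- Adjacency in the `Cₙ`-snake. -/
def cnSnakeAdj (n k : ℕ) (x y : Fin (k * (n - 1) + 1)) : Prop :=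
  cnSnakeRel n k x y ∨ cnSnakeRel n k y x

/-- Labeling `f(xᵢ) = 2^(i mod (n−1)) · (1 + 2^(n−2))^⌊i/(n−1)⌋`. -/
def cnSnakeLabel (n k : ℕ) (x : Fin (k * (n - 1) + 1)) : ℕ :=
  2 ^ ((x : ℕ) % (n - 1)) * (1 + 2 ^ (n - 2)) ^ ((x : ℕ) / (n - 1))

lemma not_two_dvd_mul {u v : ℕ} (hu : ¬ 2 ∣ u) (hv : ¬ 2 ∣ v) : ¬ 2 ∣ u * v := by
  intro h
  rcases (Nat.Prime.dvd_mul Nat.prime_two).1 h with h | h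
  · exact hu h
  · exact hv h

lemma not_two_dvd_pow {t : ℕ} (ht : ¬ 2 ∣ t) (m : ℕ) : ¬ 2 ∣ t ^ m := by
  intro h; exact ht (Nat.Prime.dvd_of_dvd_pow Nat.prime_two h)

lemma aux_two_pow {a a' u v : ℕ} (hu : ¬ 2 ∣ u) (hv : ¬ 2 ∣ v)
    (h : 2 ^ a * u = 2 ^ a' * v) : a = a' ∧ u = v := by
  induction a generalizing a' with
  | zero =>
    cases a' with
    | zero => simpa using h
    | succ s =>
      exfalso; apply hu
      rw [pow_zero, one_mul] at h
      exact h ▸ ⟨2 ^ s * v, by ring⟩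
  | succ s ih =>
    cases a' with
    | zero =>
      exfalso; apply hv
      rw [pow_zero, one_mul] at h
      exact h.symm ▸ ⟨2 ^ s * u, by ring⟩
    | succ s' =>
      have h2 : 2 * (2 ^ s * u) = 2 * (2 ^ s' * v) := by
        calc 2 * (2 ^ s * u) = 2 ^ (s + 1) * u := by ring
          _ = 2 ^ (s' + 1) * v := h
          _ = 2 * (2 ^ s' * v) := by ring
      obtain ⟨h3, h4⟩ := ih (Nat.eq_of_mul_eq_mul_left two_pos h2)
      exact ⟨by omega, h4⟩

lemma pow_two_le_of_dvd {s a u : ℕ} (hu : ¬ 2 ∣ u) (h : 2 ^ s ∣ 2 ^ a * u) : s ≤ a := by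
  by_contra hc
  have h1 : 2 ^ (a + 1) ∣ 2 ^ a * u :=
    dvd_trans (pow_dvd_pow 2 (by omega)) h
  rw [pow_succ] at h1
  exact hu ((Nat.mul_dvd_mul_iff_left (pow_pos two_pos a)).1 h1)

lemma core {p : ℕ} (hp : 1 ≤ p) {j m j' m' a b : ℕ}
    (hj : j ≤ p) (hj' : j' ≤ p) (ha : a ≤ p)
    (heq : 2 ^ j * (1 + 2 ^ p) ^ m = 2 ^ a * (1 + 2 ^ p) ^ b + 2 ^ j' * (1 + 2 ^ p) ^ m') :
    (m = m' ∧ j = j' + 1) ∨ (m = m' + 1 ∧ j = 0 ∧ j' = p) ∨ (m = m' + 1 ∧ j = 0 ∧ j' = 0) := by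
  set t : ℕ := 1 + 2 ^ p with htdef
  have h2p : 2 ≤ 2 ^ p := by
    calc 2 = 2 ^ 1 := by norm_num
      _ ≤ 2 ^ p := Nat.pow_le_pow_right (by norm_num) hp
  have ht3 : 3 ≤ t := by omega
  have htodd : ¬ 2 ∣ t := by
    have : 2 ∣ 2 ^ p := dvd_pow_self 2 (by omega)
    omega
  have htpos : 0 < t := by omega
  have hzpos : 0 < 2 ^ a * t ^ b := by positivity
  have hlt : 2 ^ j' * t ^ m' < 2 ^ j * t ^ m := by omega
  -- m' ≤ m
  have hmm : m' ≤ m := by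
    by_contra hcon
    push_neg at hcon
    have h1 : 2 ^ j * t ^ m ≤ 2 ^ p * t ^ m :=
      Nat.mul_le_mul_right _ (Nat.pow_le_pow_right (by norm_num) hj)
    have h2 : 2 ^ p * t ^ m < t * t ^ m :=
      (Nat.mul_lt_mul_right (pow_pos htpos m)).2 (by omega)
    have h3 : t * t ^ m = t ^ (m + 1) := by rw [pow_succ]; ring
    have h4 : t ^ (m + 1) ≤ t ^ m' := Nat.pow_le_pow_right (by omega) (by omega)
    have h5 : t ^ m' ≤ 2 ^ j' * t ^ m' := Nat.le_mul_of_pos_left _ (pow_pos two_pos j')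
    omega
  obtain ⟨e, rfl⟩ : ∃ e, m = m' + e := ⟨m - m', by omega⟩
  rcases Nat.eq_zero_or_pos e with he | he
  · -- same block: m = m'
    subst he
    simp only [Nat.add_zero] at heq hlt
    have hjj : j' < j := by
      by_contra hcon
      push_neg at hcon
      have : 2 ^ j ≤ 2 ^ j' := Nat.pow_le_pow_right (by norm_num) hcon
      have : 2 ^ j * t ^ m' ≤ 2 ^ j' * t ^ m' := Nat.mul_le_mul_right _ this
      omega
    obtain ⟨d, rfl⟩ : ∃ d, j = j' + d := ⟨j - j', by omega⟩
    have hd1 : 1 ≤ d := by omega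
    have hdpos : 1 ≤ 2 ^ d := Nat.one_le_two_pow
    have key : 2 ^ j' * ((2 ^ d - 1) * t ^ m') = 2 ^ a * t ^ b := by
      have expand : 2 ^ j' * ((2 ^ d - 1) * t ^ m') + 2 ^ j' * t ^ m'
          = 2 ^ (j' + d) * t ^ m' := by
        have h1 : (2 ^ d - 1) + 1 = 2 ^ d := by omega
        calc 2 ^ j' * ((2 ^ d - 1) * t ^ m') + 2 ^ j' * t ^ m'
            = 2 ^ j' * (((2 ^ d - 1) + 1) * t ^ m') := by ring
          _ = 2 ^ j' * (2 ^ d * t ^ m') := by rw [h1]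
          _ = 2 ^ (j' + d) * t ^ m' := by rw [pow_add]; ring
      exact Nat.add_right_cancel (expand.trans heq)
    have hdodd : ¬ 2 ∣ (2 ^ d - 1) := by
      have : 2 ∣ 2 ^ d := dvd_pow_self 2 (by omega)
      omega
    obtain ⟨haj, hub⟩ := aux_two_pow (not_two_dvd_mul hdodd (not_two_dvd_pow htodd _))
      (not_two_dvd_pow htodd _) key
    have hbm : m' ≤ b := by
      by_contra hcon
      push_neg at hcon
      have h1 : t ^ b < t ^ m' := Nat.pow_lt_pow_right (by omega) (by omega)
      have h2 : t ^ m' ≤ (2 ^ d - 1) * t ^ m' :=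
        Nat.le_mul_of_pos_left _ (by omega)
      omega
    obtain ⟨c, rfl⟩ : ∃ c, b = m' + c := ⟨b - m', by omega⟩
    have hcancel : 2 ^ d - 1 = t ^ c := by
      have h1 : (2 ^ d - 1) * t ^ m' = t ^ c * t ^ m' := by
        calc (2 ^ d - 1) * t ^ m' = t ^ (m' + c) := hub
          _ = t ^ c * t ^ m' := by rw [pow_add]; ring
      exact Nat.eq_of_mul_eq_mul_right (pow_pos htpos m') h1
    rcases Nat.eq_zero_or_pos c with hc | hc
    · subst hc
      have hd2 : 2 ^ d = 2 := by simp [pow_zero] at hcancel; omega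
      have : d = 1 := by
        by_contra hcon
        have : 2 ^ 2 ≤ 2 ^ d := Nat.pow_le_pow_right (by norm_num) (by omega)
        omega
      exact Or.inl ⟨rfl, by omega⟩
    · exfalso
      have h1 : t ≤ t ^ c := Nat.le_self_pow (by omega) t
      have h2 : 2 ^ d ≤ 2 ^ p := Nat.pow_le_pow_right (by norm_num) (by omega)
      omega
  · -- different blocks: e ≥ 1
    have hte : t ≤ t ^ e := Nat.le_self_pow (by omega) t
    rcases lt_trichotomy j j' with hc | hc | hc
    · -- j < j' : the j'=p path edge case
      obtain ⟨d, rfl⟩ : ∃ d, j' = j + d := ⟨j' - j, by omega⟩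
      have hd1 : 1 ≤ d := by omega
      have h2d : 2 ^ d ≤ 2 ^ p := Nat.pow_le_pow_right (by norm_num) (by omega)
      have hde : 2 ^ d < t ^ e := by omega
      have key : 2 ^ j * ((t ^ e - 2 ^ d) * t ^ m') = 2 ^ a * t ^ b := by
        have expand : 2 ^ j * ((t ^ e - 2 ^ d) * t ^ m') + 2 ^ (j + d) * t ^ m'
            = 2 ^ j * t ^ (m' + e) := by
          have h1 : (t ^ e - 2 ^ d) + 2 ^ d = t ^ e := by omega
          calc 2 ^ j * ((t ^ e - 2 ^ d) * t ^ m') + 2 ^ (j + d) * t ^ m'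
              = 2 ^ j * (((t ^ e - 2 ^ d) + 2 ^ d) * t ^ m') := by rw [pow_add]; ring
            _ = 2 ^ j * (t ^ e * t ^ m') := by rw [h1]
            _ = 2 ^ j * t ^ (m' + e) := by rw [pow_add]; ring
        exact Nat.add_right_cancel (expand.trans heq)
      have hodd : ¬ 2 ∣ (t ^ e - 2 ^ d) := by
        have h1 : ¬ 2 ∣ t ^ e := not_two_dvd_pow htodd e
        have h2 : 2 ∣ 2 ^ d := dvd_pow_self 2 (by omega)
        omega
      obtain ⟨haj, hub⟩ := aux_two_pow (not_two_dvd_mul hodd (not_two_dvd_pow htodd _))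
        (not_two_dvd_pow htodd _) key
      have hbm : m' ≤ b := by
        by_contra hcon
        push_neg at hcon
        have h1 : t ^ b < t ^ m' := Nat.pow_lt_pow_right (by omega) (by omega)
        have h2 : t ^ m' ≤ (t ^ e - 2 ^ d) * t ^ m' :=
          Nat.le_mul_of_pos_left _ (by omega)
        omega
      obtain ⟨c, rfl⟩ : ∃ c, b = m' + c := ⟨b - m', by omega⟩
      have hcancel : t ^ e - 2 ^ d = t ^ c := by
        have h1 : (t ^ e - 2 ^ d) * t ^ m' = t ^ c * t ^ m' := by
          calc (t ^ e - 2 ^ d) * t ^ m' = t ^ (m' + c) := hub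
            _ = t ^ c * t ^ m' := by rw [pow_add]; ring
        exact Nat.eq_of_mul_eq_mul_right (pow_pos htpos m') h1
      rcases Nat.eq_zero_or_pos c with hcz | hcz
      · subst hcz
        rw [pow_zero] at hcancel
        have hd2 : 2 ^ d = t ^ e - 1 := by omega
        have hdp : d = p := by
          have h1 : 2 ^ p ≤ 2 ^ d := by omega
          have h2 : p ≤ d := by
            by_contra hcon
            have : 2 ^ d < 2 ^ p := Nat.pow_lt_pow_right (by norm_num) (by omega)
            omega
          omega
        subst hdp
        have he1 : e = 1 := by
          have : t ^ e = t ^ 1 := by rw [pow_one]; omega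
          exact Nat.pow_right_injective (by omega) this
        exact Or.inr (Or.inl ⟨by omega, by omega, by omega⟩)
      · exfalso
        have h1 : t ∣ t ^ e := dvd_pow_self t (by omega)
        have h2 : t ∣ t ^ c := dvd_pow_self t (by omega)
        have h3 : t ∣ 2 ^ d := by
          have h4 : t ^ e - t ^ c = 2 ^ d := by generalize hX : 2 ^ d = X at hcancel hde ⊢; omega
          exact h4 ▸ Nat.dvd_sub h1 h2
        obtain ⟨i, hi, hti⟩ := (Nat.dvd_prime_pow Nat.prime_two).1 h3
        rcases Nat.eq_zero_or_pos i with h0 | h0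
        · subst h0; simp at hti; omega
        · exact htodd (hti ▸ dvd_pow_self 2 (by omega))
    · -- j = j' : closure edge case
      subst hc
      have hdvd : 2 ^ p ∣ t ^ e - 1 := by
        have h1 : t ≡ 1 [MOD 2 ^ p] := by
          show t % 2 ^ p = 1 % 2 ^ p
          rw [htdef, Nat.add_comm, Nat.add_mod_left]
        have h2 : (1 : ℕ) ^ e ≡ t ^ e [MOD 2 ^ p] := (h1.pow e).symm
        rw [one_pow] at h2
        exact (Nat.modEq_iff_dvd' (Nat.one_le_pow _ _ htpos)).1 h2
      obtain ⟨M, hM⟩ := hdvd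
      have hM1 : 1 ≤ M := by
        rcases Nat.eq_zero_or_pos M with h0 | h0
        · subst h0; simp at hM; omega
        · exact h0
      have key : 2 ^ (j + p) * (M * t ^ m') = 2 ^ a * t ^ b := by
        have expand : 2 ^ (j + p) * (M * t ^ m') + 2 ^ j * t ^ m'
            = 2 ^ j * t ^ (m' + e) := by
          have h1 : 2 ^ p * M + 1 = t ^ e := by omega
          calc 2 ^ (j + p) * (M * t ^ m') + 2 ^ j * t ^ m'
              = 2 ^ j * ((2 ^ p * M + 1) * t ^ m') := by rw [pow_add]; ring
            _ = 2 ^ j * (t ^ e * t ^ m') := by rw [h1]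
            _ = 2 ^ j * t ^ (m' + e) := by rw [pow_add]; ring
        exact Nat.add_right_cancel (expand.trans heq)
      have hle : j + p ≤ a :=
        pow_two_le_of_dvd (not_two_dvd_pow htodd b) ⟨M * t ^ m', key.symm⟩
      have hj0 : j = 0 := by omega
      have hap : a = p := by omega
      have key2 : M * t ^ m' = t ^ b := by
        have h1 : 2 ^ p * (M * t ^ m') = 2 ^ p * t ^ b := by
          rw [show p = j + p from by omega] at hap ⊢
          rw [← hap] at key ⊢
          exact key
        exact Nat.eq_of_mul_eq_mul_left (pow_pos two_pos p) h1
      have hbm : m' ≤ b := by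
        by_contra hcon
        push_neg at hcon
        have h1 : t ^ b < t ^ m' := Nat.pow_lt_pow_right (by omega) (by omega)
        have h2 : t ^ m' ≤ M * t ^ m' := Nat.le_mul_of_pos_left _ (by omega)
        omega
      obtain ⟨c, rfl⟩ : ∃ c, b = m' + c := ⟨b - m', by omega⟩
      have hcancel : M = t ^ c := by
        have h1 : M * t ^ m' = t ^ c * t ^ m' := by
          calc M * t ^ m' = t ^ (m' + c) := key2
            _ = t ^ c * t ^ m' := by rw [pow_add]; ring
        exact Nat.eq_of_mul_eq_mul_right (pow_pos htpos m') h1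
      subst hcancel
      rcases Nat.eq_zero_or_pos c with hcz | hcz
      · subst hcz
        rw [pow_zero, mul_one] at hM
        have he1 : e = 1 := by
          have : t ^ e = t ^ 1 := by rw [pow_one]; omega
          exact Nat.pow_right_injective (by omega) this
        exact Or.inr (Or.inr ⟨by omega, by omega, by omega⟩)
      · exfalso
        have h1 : t ∣ t ^ e := dvd_pow_self t (by omega)
        have h2 : t ∣ 2 ^ p * t ^ c := Dvd.dvd.mul_left (dvd_pow_self t (by omega)) _
        have h3 : t ∣ 1 := by
          have h4 : t ^ e - 2 ^ p * t ^ c = 1 := by omega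
          exact h4 ▸ Nat.dvd_sub h1 h2
        have := Nat.le_of_dvd one_pos h3
        omega
    · -- j > j' : impossible
      exfalso
      obtain ⟨d, rfl⟩ : ∃ d, j = j' + d := ⟨j - j', by omega⟩
      have hd1 : 1 ≤ d := by omega
      have hNpos : 2 ≤ 2 ^ d * t ^ e := by
        have h1 : 2 ≤ 2 ^ d := by
          calc 2 = 2 ^ 1 := by norm_num
            _ ≤ 2 ^ d := Nat.pow_le_pow_right (by norm_num) hd1
        have h2 : 1 ≤ t ^ e := Nat.one_le_pow _ _ htpos
        calc 2 = 2 * 1 := by norm_num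
          _ ≤ 2 ^ d * t ^ e := Nat.mul_le_mul h1 h2
      have key : 2 ^ j' * ((2 ^ d * t ^ e - 1) * t ^ m') = 2 ^ a * t ^ b := by
        have expand : 2 ^ j' * ((2 ^ d * t ^ e - 1) * t ^ m') + 2 ^ j' * t ^ m'
            = 2 ^ (j' + d) * t ^ (m' + e) := by
          have h1 : (2 ^ d * t ^ e - 1) + 1 = 2 ^ d * t ^ e := by omega
          calc 2 ^ j' * ((2 ^ d * t ^ e - 1) * t ^ m') + 2 ^ j' * t ^ m'
              = 2 ^ j' * (((2 ^ d * t ^ e - 1) + 1) * t ^ m') := by ring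
            _ = 2 ^ j' * ((2 ^ d * t ^ e) * t ^ m') := by rw [h1]
            _ = 2 ^ (j' + d) * t ^ (m' + e) := by rw [pow_add, pow_add]; ring
        exact Nat.add_right_cancel (expand.trans heq)
      have hodd : ¬ 2 ∣ (2 ^ d * t ^ e - 1) := by
        have h2 : 2 ∣ 2 ^ d * t ^ e := Dvd.dvd.mul_right (dvd_pow_self 2 (by omega)) _
        omega
      obtain ⟨haj, hub⟩ := aux_two_pow (not_two_dvd_mul hodd (not_two_dvd_pow htodd _))
        (not_two_dvd_pow htodd _) key
      have hbm : m' ≤ b := by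
        by_contra hcon
        push_neg at hcon
        have h1 : t ^ b < t ^ m' := Nat.pow_lt_pow_right (by omega) (by omega)
        have h2 : t ^ m' ≤ (2 ^ d * t ^ e - 1) * t ^ m' :=
          Nat.le_mul_of_pos_left _ (by omega)
        omega
      obtain ⟨c, rfl⟩ : ∃ c, b = m' + c := ⟨b - m', by omega⟩
      have hcancel : 2 ^ d * t ^ e - 1 = t ^ c := by
        have h1 : (2 ^ d * t ^ e - 1) * t ^ m' = t ^ c * t ^ m' := by
          calc (2 ^ d * t ^ e - 1) * t ^ m' = t ^ (m' + c) := hub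
            _ = t ^ c * t ^ m' := by rw [pow_add]; ring
        exact Nat.eq_of_mul_eq_mul_right (pow_pos htpos m') h1
      rcases le_or_gt c e with hce | hce
      · have h1 : t ^ c ≤ t ^ e := Nat.pow_le_pow_right (by omega) hce
        have h2 : 2 * t ^ e ≤ 2 ^ d * t ^ e := by
          have : 2 ≤ 2 ^ d := by
            calc 2 = 2 ^ 1 := by norm_num
              _ ≤ 2 ^ d := Nat.pow_le_pow_right (by norm_num) hd1
          exact Nat.mul_le_mul_right _ this
        omega
      · have h1 : t ^ (e + 1) ≤ t ^ c := Nat.pow_le_pow_right (by omega) (by omega)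
        have h2 : t ^ (e + 1) = t * t ^ e := by rw [pow_succ]; ring
        have h3 : 2 ^ d * t ^ e ≤ 2 ^ p * t ^ e :=
          Nat.mul_le_mul_right _ (Nat.pow_le_pow_right (by norm_num) (by omega))
        have h4 : 2 ^ p * t ^ e < t * t ^ e :=
          (Nat.mul_lt_mul_right (pow_pos htpos e)).2 (by omega)
        omega

section lemmas
variable {n k : ℕ}

lemma snake_inj (hn : 3 ≤ n) : Function.Injective (cnSnakeLabel n k) := by
  intro x y h
  unfold cnSnakeLabel at h
  have h2p : 2 ≤ 2 ^ (n - 2) := by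
    calc 2 = 2 ^ 1 := by norm_num
      _ ≤ 2 ^ (n - 2) := Nat.pow_le_pow_right (by norm_num) (by omega)
  have htodd : ¬ 2 ∣ (1 + 2 ^ (n - 2)) := by
    have : 2 ∣ 2 ^ (n - 2) := dvd_pow_self 2 (by omega)
    omega
  obtain ⟨h1, h2⟩ := aux_two_pow (not_two_dvd_pow htodd _) (not_two_dvd_pow htodd _) h
  have h3 : (x : ℕ) / (n - 1) = (y : ℕ) / (n - 1) :=
    Nat.pow_right_injective (by omega) h2
  have ex := Nat.div_add_mod (x : ℕ) (n - 1)
  have ey := Nat.div_add_mod (y : ℕ) (n - 1)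
  rw [h1, h3] at ex
  exact Fin.ext (by omega)

lemma snake_fwd (hn : 3 ≤ n) {x y : Fin (k * (n - 1) + 1)} (h : cnSnakeRel n k x y) :
    ∃ z : Fin (k * (n - 1) + 1),
      cnSnakeLabel n k y = cnSnakeLabel n k x + cnSnakeLabel n k z := by
  have hq : 0 < n - 1 := by omega
  rcases h with hxy | ⟨mm, hmk, hxv, hyv⟩
  · -- path edge
    have hx := Nat.div_add_mod (x : ℕ) (n - 1)
    have hjq : (x : ℕ) % (n - 1) < n - 1 := Nat.mod_lt _ hq
    rcases lt_or_eq_of_le (by omega : (x : ℕ) % (n - 1) + 1 ≤ n - 1) with hlt | heq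
    · -- within block
      refine ⟨x, ?_⟩
      have hy1 : (y : ℕ) = (n - 1) * ((x : ℕ) / (n - 1)) + ((x : ℕ) % (n - 1) + 1) := by
        omega
      have hym : (y : ℕ) % (n - 1) = (x : ℕ) % (n - 1) + 1 := by
        rw [hy1, Nat.mul_add_mod, Nat.mod_eq_of_lt hlt]
      have hyd : (y : ℕ) / (n - 1) = (x : ℕ) / (n - 1) := by
        rw [hy1, Nat.mul_add_div hq, Nat.div_eq_of_lt hlt, Nat.add_zero]
      unfold cnSnakeLabel
      rw [hym, hyd]
      ring
    · -- crossing to next block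
      have hy1 : (y : ℕ) = (n - 1) * ((x : ℕ) / (n - 1) + 1) := by
        have : (n-1) * ((x:ℕ)/(n-1) + 1) = (n-1) * ((x:ℕ)/(n-1)) + (n-1) := by ring
        omega
      have hmk' : (x : ℕ) / (n - 1) + 1 ≤ k := by
        have hyb : (y : ℕ) < k * (n - 1) + 1 := y.isLt
        by_contra hcon
        have h1 : (n - 1) * (k + 1) ≤ (n - 1) * ((x : ℕ) / (n - 1) + 1) :=
          Nat.mul_le_mul_left _ (by omega)
        have h2 : (n - 1) * (k + 1) = (n - 1) * k + (n - 1) := by ring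
        have h3 : (n - 1) * k = k * (n - 1) := Nat.mul_comm _ _
        omega
      refine ⟨⟨(n - 1) * ((x : ℕ) / (n - 1)), by
        have h1 : (n - 1) * ((x : ℕ) / (n - 1) + 1) ≤ (n - 1) * k :=
          Nat.mul_le_mul_left _ hmk'
        have h2 : (n - 1) * ((x:ℕ)/(n-1) + 1) = (n - 1) * ((x:ℕ)/(n-1)) + (n - 1) := by ring
        have h3 : (n - 1) * k = k * (n - 1) := Nat.mul_comm _ _
        omega⟩, ?_⟩
      unfold cnSnakeLabel
      simp only
      rw [hy1, Nat.mul_mod_right, Nat.mul_div_cancel_left _ hq,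
        Nat.mul_mod_right, Nat.mul_div_cancel_left _ hq,
        show (x : ℕ) % (n - 1) = n - 2 by omega]
      ring
  · -- closure edge
    have hmk' : mm + 1 ≤ k := hmk
    refine ⟨⟨mm * (n - 1) + (n - 2), by
      have h1 : (mm + 1) * (n - 1) ≤ k * (n - 1) := Nat.mul_le_mul_right _ (by omega)
      have h2 : (mm + 1) * (n - 1) = mm * (n - 1) + (n - 1) := by ring
      omega⟩, ?_⟩
    unfold cnSnakeLabel
    simp only
    rw [hxv, hyv, Nat.mul_mod_left, Nat.mul_mod_left,
      Nat.mul_div_cancel _ hq, Nat.mul_div_cancel _ hq]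
    rw [show mm * (n - 1) + (n - 2) = (n - 2) + mm * (n - 1) from by ring,
      Nat.add_mul_mod_self_right, Nat.add_mul_div_right _ _ hq,
      Nat.mod_eq_of_lt (by omega : n - 2 < n - 1),
      Nat.div_eq_of_lt (by omega : n - 2 < n - 1)]
    ring

lemma snake_back (hn : 3 ≤ n) {x y z : Fin (k * (n - 1) + 1)}
    (h : cnSnakeLabel n k x = cnSnakeLabel n k z + cnSnakeLabel n k y) :
    cnSnakeRel n k y x := by
  have hq : 0 < n - 1 := by omega
  have hqp : n - 1 = (n - 2) + 1 := by omega
  unfold cnSnakeLabel at h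
  have hcore := core (p := n - 2) (by omega)
    (j := (x : ℕ) % (n-1)) (m := (x : ℕ) / (n-1))
    (j' := (y : ℕ) % (n-1)) (m' := (y : ℕ) / (n-1))
    (a := (z : ℕ) % (n-1)) (b := (z : ℕ) / (n-1))
    (by have := Nat.mod_lt (x : ℕ) hq; omega)
    (by have := Nat.mod_lt (y : ℕ) hq; omega)
    (by have := Nat.mod_lt (z : ℕ) hq; omega)
    h
  have ex := Nat.div_add_mod (x : ℕ) (n - 1)
  have ey := Nat.div_add_mod (y : ℕ) (n - 1)
  rcases hcore with ⟨h1, h2⟩ | ⟨h1, h2, h3⟩ | ⟨h1, h2, h3⟩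
  · left
    rw [h1, h2] at ex
    omega
  · left
    rw [h1, h2] at ex
    have hmul : (n-1) * ((y:ℕ)/(n-1) + 1) = (n-1) * ((y:ℕ)/(n-1)) + (n-1) := by ring
    omega
  · right
    refine ⟨(y : ℕ) / (n-1), ?_, ?_, ?_⟩
    · rw [h1, h2] at ex
      have hmul : (n-1) * ((y:ℕ)/(n-1) + 1) = (n-1) * ((y:ℕ)/(n-1)) + (n-1) := by ring
      have hxb : (x : ℕ) < k * (n-1) + 1 := x.isLt
      by_contra hcon
      have h4 : (k + 1) * (n - 1) ≤ ((y:ℕ)/(n-1) + 1) * (n-1) :=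
        Nat.mul_le_mul_right _ (by omega)
      have h5 : (k + 1) * (n-1) = k * (n-1) + (n-1) := by ring
      have h6 : ((y:ℕ)/(n-1) + 1) * (n-1) = (n-1) * ((y:ℕ)/(n-1)) + (n-1) := by ring
      omega
    · have h6 : ((y:ℕ)/(n-1)) * (n-1) = (n-1) * ((y:ℕ)/(n-1)) := by ring
      omega
    · rw [h1, h2] at ex
      have h6 : ((y:ℕ)/(n-1) + 1) * (n-1) = (n-1) * ((y:ℕ)/(n-1)) + (n-1) := by ring
      have hmul : (n-1) * ((y:ℕ)/(n-1) + 1) = (n-1) * ((y:ℕ)/(n-1)) + (n-1) := by ring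
      omega

end lemmas

/-- For `n ≥ 3`, the `Cₙ`-snake with `k ≥ 1` blocks is a difference graph via
the labeling above. -/
theorem stmt_11 (n k : ℕ) (hn : 3 ≤ n) (hk : 1 ≤ k) :
    Function.Injective (cnSnakeLabel n k) ∧
    ∀ x y, x ≠ y →
      (cnSnakeAdj n k x y ↔
        ((cnSnakeLabel n k x : ℤ) - (cnSnakeLabel n k y : ℤ)).natAbs ∈
          Set.range (cnSnakeLabel n k)) := by
  refine ⟨snake_inj hn, fun x y hxy => ⟨fun hadj => ?_, fun hmem => ?_⟩⟩
  · rcases hadj with h | h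
    · obtain ⟨z, hz⟩ := snake_fwd hn h
      exact ⟨z, by omega⟩
    · obtain ⟨z, hz⟩ := snake_fwd hn h
      exact ⟨z, by omega⟩
  · obtain ⟨z, hz⟩ := hmem
    have hne : cnSnakeLabel n k x ≠ cnSnakeLabel n k y :=
      fun hc => hxy (snake_inj hn hc)
    rcases Nat.lt_or_ge (cnSnakeLabel n k x) (cnSnakeLabel n k y) with hlt | hge
    · exact Or.inl (snake_back hn (by omega :
        cnSnakeLabel n k y = cnSnakeLabel n k z + cnSnakeLabel n k x))
    · exact Or.inr (snake_back hn (by omega :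
        cnSnakeLabel n k x = cnSnakeLabel n k z + cnSnakeLabel n k y))
end

section
/- For n ≥ 3, the alternate Cₙ-snake is a difference graph via the labeling f(u_i) = 2^{j + ⌊i/n⌋} · (1 + 2^{n−2})^{⌊i/n⌋} for i = 0, 1, 2, ..., where j = i mod n: the labeling is injective, adjacent vertices have label difference in the label set, and non-adjacent vertices have label difference outside the label set. -/
/-- Directed edge relation of the alternate `Cₙ`-snake with `k` blocks on
vertices `u₀, …, u_{kn}`: consecutive vertices are adjacent (path edge
`u_{mn} u_{mn+1}` and the cycle path `u_{mn+1}, …, u_{(m+1)n}`), and each block's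
cycle is closed by the edge `u_{mn+1} u_{(m+1)n}`. -/
def altCnSnakeRel (n k : ℕ) (a b : Fin (k * n + 1)) : Prop :=
  (b : ℕ) = (a : ℕ) + 1 ∨
    ∃ m < k, (a : ℕ) = m * n + 1 ∧ (b : ℕ) = (m + 1) * n

/-- Adjacency in the alternate `Cₙ`-snake. -/
def altCnSnakeAdj (n k : ℕ) (x y : Fin (k * n + 1)) : Prop :=
  altCnSnakeRel n k x y ∨ altCnSnakeRel n k y x

/-- Labeling `f(uᵢ) = 2^((i mod n) + ⌊i/n⌋) · (1 + 2^(n−2))^⌊i/n⌋`. -/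
def altCnSnakeLabel (n k : ℕ) (x : Fin (k * n + 1)) : ℕ :=
  2 ^ ((x : ℕ) % n + (x : ℕ) / n) * (1 + 2 ^ (n - 2)) ^ ((x : ℕ) / n)

/-!
Write `n = p + 2` and `B = 1 + 2 ^ p`, which is odd. The label of `u_{nq+j}` (`j < n`) is
`2 ^ (j + q) * B ^ q`, and `|f x - f y| ∈ f(V)` means `f x + f z = f y` for some `z` (or the
same with `x, y` swapped). Since `B` is coprime to `2`, comparing the powers of `B` forces `x`
and `z` into the same block `q`; then `2 ^ a + 2 ^ (a + d) = 2 ^ c * B ^ e` with `d ≤ p + 1` leaves only `d = 0`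
(`f(u_{i+1}) = 2 f(u_i)`, a path edge) and `d = p`, `e = 1`
(`f(u_{nq+1}) + f(u_{nq+n-1}) = f(u_{n(q+1)})`, the two edges into `u_{n(q+1)}`).
-/

theorem two_pow_mul_odd_inj {a c u v : ℕ} (hu : Odd u) (hv : Odd v)
    (h : 2 ^ a * u = 2 ^ c * v) : a = c ∧ u = v := by
  have hval (b w : ℕ) (hw : Odd w) : padicValNat 2 (2 ^ b * w) = b := by
    rw [padicValNat.mul (by positivity) hw.pos.ne', padicValNat.prime_pow,
      padicValNat.eq_zero_of_not_dvd hw.not_two_dvd_nat, add_zero]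
  have hac : a = c := by rw [← hval a u hu, ← hval c v hv, h]
  subst hac
  exact ⟨rfl, Nat.eq_of_mul_eq_mul_left (by positivity) h⟩

theorem le_of_pow_dvd_mul_pow {B m b c : ℕ} (hB : 1 < B) (hm : B.Coprime m)
    (h : B ^ b ∣ m * B ^ c) : b ≤ c :=
  (Nat.pow_dvd_pow_iff_le_right hB).mp ((hm.pow_left b).dvd_of_dvd_mul_left h)

theorem two_pow_mul_pow_inj {B a b c d : ℕ} (hB : Odd B) (hB1 : 1 < B)
    (h : 2 ^ a * B ^ b = 2 ^ c * B ^ d) : a = c ∧ b = d := by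
  obtain ⟨hac, hbd⟩ := two_pow_mul_odd_inj (hB.pow (n := b)) hB.pow h
  exact ⟨hac, Nat.pow_right_injective hB1 hbd⟩

theorem odd_one_add_two_pow {p : ℕ} (hp : p ≠ 0) : Odd (1 + 2 ^ p) :=
  add_comm (2 ^ p) 1 ▸ (Nat.even_pow.mpr ⟨even_two, hp⟩).add_one

theorem one_add_two_pow_eq_pow {p d e : ℕ} (hd : d ≤ p + 1) (h : 1 + 2 ^ d = (1 + 2 ^ p) ^ e) :
    d = p ∧ e = 1 := by
  rcases e with _ | _ | e
  · simp at h
  · exact ⟨Nat.pow_right_injective le_rfl (by simpa using h), rfl⟩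
  · -- `(1 + 2^p)^2 > 1 + 2^(p+1) ≥ 1 + 2^d`
    have hsq : (1 + 2 ^ p) ^ 2 ≤ (1 + 2 ^ p) ^ (e + 1 + 1) :=
      Nat.pow_le_pow_right (by positivity) (by omega)
    have hd' : 2 ^ d ≤ 2 ^ (p + 1) := Nat.pow_le_pow_right (by norm_num) hd
    have : (1 + 2 ^ p) ^ 2 = 1 + 2 ^ (p + 1) + 2 ^ p * 2 ^ p := by ring
    have : 0 < 2 ^ p * 2 ^ p := by positivity
    omega

theorem two_pow_add_two_pow_eq {p a d c e : ℕ} (hp : p ≠ 0) (hd : d ≤ p + 1)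
    (h : 2 ^ a + 2 ^ (a + d) = 2 ^ c * (1 + 2 ^ p) ^ e) :
    (d = 0 ∧ c = a + 1 ∧ e = 0) ∨ (d = p ∧ c = a ∧ e = 1) := by
  have hB := odd_one_add_two_pow hp
  rcases Nat.eq_zero_or_pos d with rfl | hd0
  · have h' : 2 ^ (a + 1) * 1 = 2 ^ c * (1 + 2 ^ p) ^ e := by rw [← h]; ring
    obtain ⟨hc, he⟩ := two_pow_mul_odd_inj odd_one hB.pow h'
    exact Or.inl ⟨rfl, hc.symm, (Nat.pow_eq_one.mp he.symm).resolve_left (by simp)⟩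
  · have h' : 2 ^ a * (1 + 2 ^ d) = 2 ^ c * (1 + 2 ^ p) ^ e := by rw [← h]; ring
    obtain ⟨hc, he⟩ := two_pow_mul_odd_inj (odd_one_add_two_pow hd0.ne') hB.pow h'
    obtain ⟨rfl, rfl⟩ := one_add_two_pow_eq_pow hd he
    exact Or.inr ⟨rfl, hc.symm, rfl⟩

theorem mul_add_eq_mul_add_iff {n q j q' j' : ℕ} (hj : j < n) (hj' : j' < n) :
    n * q + j = n * q' + j' ↔ q = q' ∧ j = j' := by
  refine ⟨fun h => ?_, by rintro ⟨rfl, rfl⟩; rfl⟩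
  have hn : 0 < n := by omega
  have hq := congrArg (· / n) h
  have hr := congrArg (· % n) h
  simp only [Nat.mul_add_div hn, Nat.div_eq_of_lt hj, Nat.div_eq_of_lt hj', Nat.mul_add_mod,
    Nat.mod_eq_of_lt hj, Nat.mod_eq_of_lt hj', add_zero] at hq hr
  exact ⟨hq, hr⟩

theorem exists_eq_mul_add_lt {n : ℕ} (hn : 0 < n) (x : ℕ) : ∃ q j, j < n ∧ x = n * q + j :=
  ⟨x / n, x % n, Nat.mod_lt x hn, (Nat.div_add_mod x n).symm⟩

theorem natAbs_sub_mem_range_iff {α : Type*} (f : α → ℕ) (a b : ℕ) :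
    ((a : ℤ) - b).natAbs ∈ Set.range f ↔ (∃ z, a + f z = b) ∨ ∃ z, b + f z = a := by
  constructor
  · rintro ⟨z, hz⟩
    rcases le_total a b with h | h
    · exact Or.inl ⟨z, by omega⟩
    · exact Or.inr ⟨z, by omega⟩
  · rintro (⟨z, hz⟩ | ⟨z, hz⟩) <;> exact ⟨z, by omega⟩

/-- The label of `u_{(p+2)q+j}`, for `j < p + 2`; the vertex is addressed by its block `q` and
position `j` in the block. -/
def blockLabel (p q j : ℕ) : ℕ := 2 ^ (j + q) * (1 + 2 ^ p) ^ q

/-- The edges `u_i u_{i+1}` and `u_{(p+2)q+1} u_{(p+2)(q+1)}` in these coordinates. -/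
def IsSnakeStep (p q₁ j₁ q₂ j₂ : ℕ) : Prop :=
  (q₂ = q₁ ∧ j₂ = j₁ + 1) ∨ (q₂ = q₁ + 1 ∧ j₂ = 0 ∧ (j₁ = 1 ∨ j₁ = p + 1))

section blockLabel

variable {p q q₁ q₂ q₃ j₁ j₂ j₃ : ℕ}

theorem blockLabel_add_ne_of_lt (hp : p ≠ 0) (hq : q₁ < q₃) (hj₂ : j₂ ≤ p + 1) :
    blockLabel p q₁ j₁ + blockLabel p q₃ j₃ ≠ blockLabel p q₂ j₂ := by
  intro h
  unfold blockLabel at h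
  set B := 1 + 2 ^ p
  have hB : Odd B := odd_one_add_two_pow hp
  have hB1 : 1 < B := Nat.lt_add_of_pos_right (by positivity)
  have hBcop (a : ℕ) : B.Coprime (2 ^ a) := hB.coprime_two_right.pow_right a
  obtain ⟨d, rfl⟩ : ∃ d, q₃ = q₁ + d + 1 := ⟨q₃ - q₁ - 1, by omega⟩
  set X := 2 ^ (j₁ + q₁) + 2 ^ (j₃ + (q₁ + d + 1)) * B ^ (d + 1)
  have hX : B ^ q₁ * X = 2 ^ (j₂ + q₂) * B ^ q₂ := by rw [← h]; ring
  -- `X ≡ 2 ^ (j₁ + q₁) [MOD B]`, so the powers of `B` on both sides must match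
  have hXcop : B.Coprime X := by
    rw [show X = 2 ^ (j₁ + q₁) + 2 ^ (j₃ + (q₁ + d + 1)) * B ^ d * B by ring,
      Nat.coprime_add_mul_right_right]
    exact hBcop _
  have hle : q₁ ≤ q₂ := le_of_pow_dvd_mul_pow hB1 (hBcop _) (Dvd.intro X hX)
  have hge : q₂ ≤ q₁ :=
    le_of_pow_dvd_mul_pow hB1 hXcop (Dvd.intro_left _ (hX.symm.trans (mul_comm _ _)))
  obtain rfl : q₂ = q₁ := le_antisymm hge hle
  have hX2 : X = 2 ^ (j₂ + q₂) :=
    Nat.eq_of_mul_eq_mul_left (by positivity) (hX.trans (mul_comm _ _))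
  have hsize : 2 ^ (j₃ + (q₂ + d + 1) + p) < 2 ^ (j₂ + q₂) := calc
    2 ^ (j₃ + (q₂ + d + 1) + p) < 2 ^ (j₃ + (q₂ + d + 1)) * B := by
      rw [pow_add]; exact Nat.mul_lt_mul_of_pos_left (by omega) (by positivity)
    _ ≤ 2 ^ (j₃ + (q₂ + d + 1)) * B ^ (d + 1) :=
      Nat.mul_le_mul_left _ (Nat.le_self_pow (by omega) B)
    _ < X := Nat.lt_add_of_pos_left (by positivity)
    _ = 2 ^ (j₂ + q₂) := hX2
  have := (Nat.pow_lt_pow_iff_right (by norm_num)).mp hsize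
  omega

theorem blockLabel_add_blockLabel_eq (hp : p ≠ 0) (hj : j₁ ≤ j₃) (hj₃ : j₃ ≤ p + 1)
    (h : blockLabel p q j₁ + blockLabel p q j₃ = blockLabel p q₂ j₂) :
    (j₃ = j₁ ∧ q₂ = q ∧ j₂ = j₁ + 1) ∨ (j₁ = 1 ∧ j₃ = p + 1 ∧ q₂ = q + 1 ∧ j₂ = 0) := by
  unfold blockLabel at h
  set B := 1 + 2 ^ p
  obtain ⟨d, rfl⟩ : ∃ d, j₃ = j₁ + d := ⟨j₃ - j₁, by omega⟩
  have hX : B ^ q * (2 ^ (j₁ + q) + 2 ^ (j₁ + q + d)) = 2 ^ (j₂ + q₂) * B ^ q₂ := by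
    rw [← h]; ring
  have hle : q ≤ q₂ := le_of_pow_dvd_mul_pow (Nat.lt_add_of_pos_right (by positivity))
    ((odd_one_add_two_pow hp).coprime_two_right.pow_right _) (Dvd.intro _ hX)
  obtain ⟨e, rfl⟩ : ∃ e, q₂ = q + e := ⟨q₂ - q, by omega⟩
  have hcancel : 2 ^ (j₁ + q) + 2 ^ (j₁ + q + d) = 2 ^ (j₂ + (q + e)) * B ^ e :=
    Nat.eq_of_mul_eq_mul_left (n := B ^ q) (by positivity) (by rw [hX]; ring)
  rcases two_pow_add_two_pow_eq hp (by omega) hcancel with ⟨rfl, hc, rfl⟩ | ⟨rfl, hc, rfl⟩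
  · left; omega
  · right; omega

theorem isSnakeStep_of_blockLabel_add_eq (hp : p ≠ 0) (hj₁ : j₁ ≤ p + 1) (hj₂ : j₂ ≤ p + 1)
    (hj₃ : j₃ ≤ p + 1) (h : blockLabel p q₁ j₁ + blockLabel p q₃ j₃ = blockLabel p q₂ j₂) :
    IsSnakeStep p q₁ j₁ q₂ j₂ := by
  rcases lt_trichotomy q₁ q₃ with hq | rfl | hq
  · exact absurd h (blockLabel_add_ne_of_lt hp hq hj₂)
  · rcases le_total j₁ j₃ with hj | hj
    · rcases blockLabel_add_blockLabel_eq hp hj hj₃ h with ⟨-, rfl, rfl⟩ | ⟨rfl, -, rfl, rfl⟩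
      · exact Or.inl ⟨rfl, rfl⟩
      · exact Or.inr ⟨rfl, rfl, Or.inl rfl⟩
    · rcases blockLabel_add_blockLabel_eq hp hj hj₁ ((add_comm _ _).trans h) with
        ⟨rfl, rfl, rfl⟩ | ⟨-, rfl, rfl, rfl⟩
      · exact Or.inl ⟨rfl, rfl⟩
      · exact Or.inr ⟨rfl, rfl, Or.inr rfl⟩
  · exact absurd ((add_comm _ _).trans h) (blockLabel_add_ne_of_lt hp hq hj₂)

theorem exists_blockLabel_add_eq_of_isSnakeStep (hj₁ : j₁ ≤ p + 1)
    (h : IsSnakeStep p q₁ j₁ q₂ j₂) :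
    ∃ j₃ ≤ p + 1, blockLabel p q₁ j₁ + blockLabel p q₁ j₃ = blockLabel p q₂ j₂ := by
  unfold blockLabel
  rcases h with ⟨rfl, rfl⟩ | ⟨rfl, rfl, rfl | rfl⟩
  · exact ⟨j₁, hj₁, by ring⟩
  · exact ⟨p + 1, le_rfl, by ring⟩
  · exact ⟨1, by omega, by ring⟩

theorem blockLabel_inj (hp : p ≠ 0) (h : blockLabel p q₁ j₁ = blockLabel p q₂ j₂) :
    q₁ = q₂ ∧ j₁ = j₂ := by
  obtain ⟨hj, hq⟩ := two_pow_mul_pow_inj (odd_one_add_two_pow hp)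
    (Nat.lt_add_of_pos_right (by positivity)) h
  omega

end blockLabel

section snake

variable {p k q₁ q₂ j₁ j₂ : ℕ}

theorem IsSnakeStep.mul_lt (h : IsSnakeStep p q₁ j₁ q₂ j₂) : (p + 2) * q₁ < (p + 2) * q₂ + j₂ := by
  rcases h with ⟨rfl, rfl⟩ | ⟨rfl, rfl, -⟩
  · omega
  · rw [mul_add]; omega

theorem altCnSnakeLabel_eq_blockLabel {x : Fin (k * (p + 2) + 1)} (hj : j₁ < p + 2)
    (hx : (x : ℕ) = (p + 2) * q₁ + j₁) : altCnSnakeLabel (p + 2) k x = blockLabel p q₁ j₁ := by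
  rw [altCnSnakeLabel, hx, Nat.mul_add_mod, Nat.mod_eq_of_lt hj, Nat.mul_add_div (by omega),
    Nat.div_eq_of_lt hj, add_zero, Nat.add_sub_cancel, blockLabel]

theorem altCnSnakeRel_iff_isSnakeStep {x y : Fin (k * (p + 2) + 1)} (hj₁ : j₁ < p + 2)
    (hj₂ : j₂ < p + 2) (hx : (x : ℕ) = (p + 2) * q₁ + j₁) (hy : (y : ℕ) = (p + 2) * q₂ + j₂) :
    altCnSnakeRel (p + 2) k x y ↔ IsSnakeStep p q₁ j₁ q₂ j₂ := by
  have hyk : (p + 2) * q₂ + j₂ ≤ (p + 2) * k := by rw [mul_comm _ k, ← hy]; omega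
  rw [altCnSnakeRel, hx, hy]
  constructor
  · rintro (h | ⟨m, -, h₁, h₂⟩)
    · rcases Nat.lt_or_ge (j₁ + 1) (p + 2) with hj | hj
      · exact Or.inl ((mul_add_eq_mul_add_iff hj₂ hj).mp (by omega))
      · obtain ⟨rfl, rfl⟩ := (mul_add_eq_mul_add_iff hj₂ (by omega : 0 < p + 2)).mp
          (show (p + 2) * q₂ + j₂ = (p + 2) * (q₁ + 1) + 0 by rw [mul_add]; omega)
        exact Or.inr ⟨rfl, rfl, Or.inr (by omega)⟩
    · obtain ⟨rfl, rfl⟩ := (mul_add_eq_mul_add_iff hj₁ (by omega : 1 < p + 2)).mp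
        (h₁.trans (by ring))
      obtain ⟨rfl, rfl⟩ := (mul_add_eq_mul_add_iff hj₂ (by omega : 0 < p + 2)).mp
        (show (p + 2) * q₂ + j₂ = (p + 2) * (q₁ + 1) + 0 by rw [h₂]; ring)
      exact Or.inr ⟨rfl, rfl, Or.inl rfl⟩
  · rintro (⟨rfl, rfl⟩ | ⟨rfl, rfl, rfl | rfl⟩)
    · exact Or.inl rfl
    · refine Or.inr ⟨q₁, Nat.lt_of_mul_lt_mul_left (a := p + 2) (by rw [mul_add] at hyk; omega),
        by ring, by ring⟩
    · exact Or.inl (by ring)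

theorem altCnSnakeRel_iff_exists_label_add (hp : p ≠ 0) (x y : Fin (k * (p + 2) + 1)) :
    altCnSnakeRel (p + 2) k x y ↔
      ∃ z, altCnSnakeLabel (p + 2) k x + altCnSnakeLabel (p + 2) k z =
        altCnSnakeLabel (p + 2) k y := by
  obtain ⟨q₁, j₁, hj₁, hx⟩ := exists_eq_mul_add_lt (by omega : 0 < p + 2) x
  obtain ⟨q₂, j₂, hj₂, hy⟩ := exists_eq_mul_add_lt (by omega : 0 < p + 2) y
  rw [altCnSnakeRel_iff_isSnakeStep hj₁ hj₂ hx hy, altCnSnakeLabel_eq_blockLabel hj₁ hx,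
    altCnSnakeLabel_eq_blockLabel hj₂ hy]
  constructor
  · intro hs
    obtain ⟨j₃, hj₃, h⟩ := exists_blockLabel_add_eq_of_isSnakeStep (by omega) hs
    have hk : k * (p + 2) = (p + 2) * k := mul_comm _ _
    have hq₁ : q₁ < k := Nat.lt_of_mul_lt_mul_left (a := p + 2) (by
      have := hs.mul_lt; have := y.isLt; omega)
    have hz : (p + 2) * q₁ + j₃ < k * (p + 2) + 1 := by
      have : (p + 2) * (q₁ + 1) ≤ (p + 2) * k := Nat.mul_le_mul_left _ hq₁
      rw [mul_add] at this; omega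
    exact ⟨⟨_, hz⟩, by rwa [altCnSnakeLabel_eq_blockLabel (by omega) rfl]⟩
  · rintro ⟨z, hz⟩
    obtain ⟨q₃, j₃, hj₃, hzv⟩ := exists_eq_mul_add_lt (by omega : 0 < p + 2) z
    rw [altCnSnakeLabel_eq_blockLabel hj₃ hzv] at hz
    exact isSnakeStep_of_blockLabel_add_eq hp (by omega) (by omega) (by omega) hz

theorem altCnSnakeLabel_injective (hp : p ≠ 0) :
    Function.Injective (altCnSnakeLabel (p + 2) k) := by
  intro x y h
  obtain ⟨q₁, j₁, hj₁, hx⟩ := exists_eq_mul_add_lt (by omega : 0 < p + 2) x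
  obtain ⟨q₂, j₂, hj₂, hy⟩ := exists_eq_mul_add_lt (by omega : 0 < p + 2) y
  rw [altCnSnakeLabel_eq_blockLabel hj₁ hx, altCnSnakeLabel_eq_blockLabel hj₂ hy] at h
  obtain ⟨rfl, rfl⟩ := blockLabel_inj hp h
  exact Fin.ext (hx.trans hy.symm)

end snake

theorem stmt_12_general (n k : ℕ) (hn : 3 ≤ n) :
    Function.Injective (altCnSnakeLabel n k) ∧
    ∀ x y, x ≠ y →
      (altCnSnakeAdj n k x y ↔
        ((altCnSnakeLabel n k x : ℤ) - (altCnSnakeLabel n k y : ℤ)).natAbs ∈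
          Set.range (altCnSnakeLabel n k)) := by
  obtain ⟨p, rfl⟩ : ∃ p, n = p + 2 := ⟨n - 2, by omega⟩
  have hp : p ≠ 0 := by omega
  refine ⟨altCnSnakeLabel_injective hp, fun x y _ => ?_⟩
  rw [natAbs_sub_mem_range_iff, altCnSnakeAdj, altCnSnakeRel_iff_exists_label_add hp,
    altCnSnakeRel_iff_exists_label_add hp]

/-- For `n ≥ 3`, the alternate `Cₙ`-snake with `k ≥ 1` blocks is a difference
graph via the labeling above. -/
theorem stmt_12 (n k : ℕ) (hn : 3 ≤ n) (hk : 1 ≤ k) :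
    Function.Injective (altCnSnakeLabel n k) ∧
    ∀ x y, x ≠ y →
      (altCnSnakeAdj n k x y ↔
        ((altCnSnakeLabel n k x : ℤ) - (altCnSnakeLabel n k y : ℤ)).natAbs ∈
          Set.range (altCnSnakeLabel n k)) :=
  stmt_12_general n k hn
end

section
/- The complete bipartite graph K_{2,4} is not a difference graph: there is no 6-element set S of positive integers and bijective labeling f of the vertices of K_{2,4} by S such that two vertices are adjacent if and only if the absolute difference of their labels lies in S. -/
set_option maxHeartbeats 1000000

private lemma natAbs_eq6 (u v w : ℕ) : ((u:ℤ)-v).natAbs = w ↔ (u = v + w ∨ v = u + w) := by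
  omega

private lemma lemL2d (x y a b c d : ℕ) (hyx : y < x) (hab : a < b) (hbc : b < c) (hcd : c < d)
    (py : 0 < y) (pa : 0 < a)
    (hxd : x < d)
    (E03 : (x = d + x ∨ d = x + x) ∨
      (x = d + y ∨ d = x + y) ∨
      (x = d + a ∨ d = x + a) ∨
      (x = d + b ∨ d = x + b) ∨
      (x = d + c ∨ d = x + c) ∨
      (x = d + d ∨ d = x + d))
    (E13 : (y = d + x ∨ d = y + x) ∨
      (y = d + y ∨ d = y + y) ∨
      (y = d + a ∨ d = y + a) ∨
      (y = d + b ∨ d = y + b) ∨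
      (y = d + c ∨ d = y + c) ∨
      (y = d + d ∨ d = y + d))
    (n03x : ¬ d = a + x) (n13x : ¬ d = b + x) (n23x : ¬ d = c + x)
    (n03y : ¬ d = a + y) (n13y : ¬ d = b + y) (n23y : ¬ d = c + y) :
    d = x + y := by omega

private lemma lem2a (x y a b c d : ℕ) (hyx : y < x) (hab : a < b) (hbc : b < c) (hcd : c < d)
    (py : 0 < y) (pa : 0 < a)
    (hxc : x < c) (hd2 : d = x + y)
    (E02 : (x = c + x ∨ c = x + x) ∨
      (x = c + y ∨ c = x + y) ∨
      (x = c + a ∨ c = x + a) ∨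
      (x = c + b ∨ c = x + b) ∨
      (x = c + c ∨ c = x + c) ∨
      (x = c + d ∨ c = x + d))
    (E12 : (y = c + x ∨ c = y + x) ∨
      (y = c + y ∨ c = y + y) ∨
      (y = c + a ∨ c = y + a) ∨
      (y = c + b ∨ c = y + b) ∨
      (y = c + c ∨ c = y + c) ∨
      (y = c + d ∨ c = y + d))
    (n02x : ¬ c = a + x) (n12x : ¬ c = b + x)
    (n02y : ¬ c = a + y) (n12y : ¬ c = b + y) : False := by omega

private lemma lem2b1 (x y a b c d : ℕ) (hyx : y < x) (hab : a < b) (hbc : b < c) (hcd : c < d)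
    (py : 0 < y) (pa : 0 < a)
    (hcx : c < x) (hxd : x < d)
    (E00 : (x = a + x ∨ a = x + x) ∨
      (x = a + y ∨ a = x + y) ∨
      (x = a + a ∨ a = x + a) ∨
      (x = a + b ∨ a = x + b) ∨
      (x = a + c ∨ a = x + c) ∨
      (x = a + d ∨ a = x + d))
    (E01 : (x = b + x ∨ b = x + x) ∨
      (x = b + y ∨ b = x + y) ∨
      (x = b + a ∨ b = x + a) ∨
      (x = b + b ∨ b = x + b) ∨
      (x = b + c ∨ b = x + c) ∨
      (x = b + d ∨ b = x + d))
    (E02 : (x = c + x ∨ c = x + x) ∨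
      (x = c + y ∨ c = x + y) ∨
      (x = c + a ∨ c = x + a) ∨
      (x = c + b ∨ c = x + b) ∨
      (x = c + c ∨ c = x + c) ∨
      (x = c + d ∨ c = x + d))
    (la : ¬ x = y + a) (lb : ¬ x = y + b) (lc : ¬ x = y + c) :
    x = a + c ∧ x = 2 * b := by omega

private lemma lemF (x y a b c d r : ℕ) (hyx : y < x) (hab : a < b) (hbc : b < c) (hcd : c < d)
    (py : 0 < y) (pa : 0 < a)
    (pr : 0 < r) (hrc : r ≤ c) (hcx : c < x) (hxd : x < d)
    (E : (y = r + x ∨ r = y + x) ∨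
      (y = r + y ∨ r = y + y) ∨
      (y = r + a ∨ r = y + a) ∨
      (y = r + b ∨ r = y + b) ∨
      (y = r + c ∨ r = y + c) ∨
      (y = r + d ∨ r = y + d)) :
    r = y + y ∨ r = y + a ∨ r = y + b ∨ r = y + c ∨
      y = r + a ∨ y = r + b ∨ y = r + c := by omega

private lemma lem2b2 (x y a b c d : ℕ) (hyx : y < x) (hab : a < b) (hbc : b < c) (hcd : c < d)
    (py : 0 < y) (pa : 0 < a)
    (hcx : c < x)
    (dya : y ≠ a) (dyb : y ≠ b) (dyc : y ≠ c)
    (hx2a : x = a + c) (hx2b : x = 2 * b)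
    (F10 : a = y + y ∨ a = y + a ∨ a = y + b ∨ a = y + c ∨
      y = a + a ∨ y = a + b ∨ y = a + c)
    (F11 : b = y + y ∨ b = y + a ∨ b = y + b ∨ b = y + c ∨
      y = b + a ∨ y = b + b ∨ y = b + c)
    (F12 : c = y + y ∨ c = y + a ∨ c = y + b ∨ c = y + c ∨
      y = c + a ∨ y = c + b ∨ y = c + c)
    (n01y : ¬ b = a + y) (n02y : ¬ c = a + y) (n12y : ¬ c = b + y) : False := by omega

private lemma lemH (x y a b c d r : ℕ) (hyx : y < x) (hab : a < b) (hbc : b < c) (hcd : c < d)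
    (py : 0 < y) (pa : 0 < a)
    (pr : 0 < r) (hrd : r ≤ d) (hdx : d < x)
    (hl : ¬ x = y + r)
    (E : (x = r + x ∨ r = x + x) ∨
      (x = r + y ∨ r = x + y) ∨
      (x = r + a ∨ r = x + a) ∨
      (x = r + b ∨ r = x + b) ∨
      (x = r + c ∨ r = x + c) ∨
      (x = r + d ∨ r = x + d)) :
    x = r + a ∨ x = r + b ∨ x = r + c ∨ x = r + d := by omega

private lemma lemhx1 (x y a b c d : ℕ) (hyx : y < x) (hab : a < b) (hbc : b < c) (hcd : c < d)
    (py : 0 < y) (pa : 0 < a)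
    (hdx : d < x)
    (H00 : x = a + a ∨ x = a + b ∨ x = a + c ∨ x = a + d)
    (H01 : x = b + a ∨ x = b + b ∨ x = b + c ∨ x = b + d)
    (H02 : x = c + a ∨ x = c + b ∨ x = c + c ∨ x = c + d)
    (H03 : x = d + a ∨ x = d + b ∨ x = d + c ∨ x = d + d) :
    x = a + d ∧ x = b + c := by omega

private lemma lem1bd (x y a b c d : ℕ) (hyx : y < x) (hab : a < b) (hbc : b < c) (hcd : c < d)
    (py : 0 < y) (pa : 0 < a)
    (hyd : y < d) (hdx : d < x)
    (E13 : (y = d + x ∨ d = y + x) ∨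
      (y = d + y ∨ d = y + y) ∨
      (y = d + a ∨ d = y + a) ∨
      (y = d + b ∨ d = y + b) ∨
      (y = d + c ∨ d = y + c) ∨
      (y = d + d ∨ d = y + d))
    (n03y : ¬ d = a + y) (n13y : ¬ d = b + y) (n23y : ¬ d = c + y) :
    d = 2 * y := by omega

private lemma lemG0 (x y a b c d : ℕ) (hyx : y < x) (hab : a < b) (hbc : b < c) (hcd : c < d)
    (py : 0 < y) (pa : 0 < a)
    (hdx : d < x) (hd2 : d = 2 * y)
    (E10 : (y = a + x ∨ a = y + x) ∨
      (y = a + y ∨ a = y + y) ∨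
      (y = a + a ∨ a = y + a) ∨
      (y = a + b ∨ a = y + b) ∨
      (y = a + c ∨ a = y + c) ∨
      (y = a + d ∨ a = y + d)) :
    y = 2 * a ∨ y = a + a ∨ y = a + b ∨ y = a + c := by omega

private lemma lemG1 (x y a b c d : ℕ) (hyx : y < x) (hab : a < b) (hbc : b < c) (hcd : c < d)
    (py : 0 < y) (pa : 0 < a)
    (hdx : d < x) (hd2 : d = 2 * y)
    (E11 : (y = b + x ∨ b = y + x) ∨
      (y = b + y ∨ b = y + y) ∨
      (y = b + a ∨ b = y + a) ∨
      (y = b + b ∨ b = y + b) ∨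
      (y = b + c ∨ b = y + c) ∨
      (y = b + d ∨ b = y + d))
    (n01y : ¬ b = a + y) :
    y = 2 * b ∨ y = b + a ∨ y = b + b ∨ y = b + c := by omega

private lemma lemG2 (x y a b c d : ℕ) (hyx : y < x) (hab : a < b) (hbc : b < c) (hcd : c < d)
    (py : 0 < y) (pa : 0 < a)
    (hdx : d < x) (hd2 : d = 2 * y)
    (E12 : (y = c + x ∨ c = y + x) ∨
      (y = c + y ∨ c = y + y) ∨
      (y = c + a ∨ c = y + a) ∨
      (y = c + b ∨ c = y + b) ∨
      (y = c + c ∨ c = y + c) ∨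
      (y = c + d ∨ c = y + d))
    (n02y : ¬ c = a + y) (n12y : ¬ c = b + y) :
    y = 2 * c ∨ y = c + a ∨ y = c + b ∨ y = c + c := by omega

private lemma lem1b2 (x y a b c d : ℕ) (hyx : y < x) (hab : a < b) (hbc : b < c) (hcd : c < d)
    (py : 0 < y) (pa : 0 < a)
    (hdx : d < x) (dya : y ≠ a) (dyb : y ≠ b) (dyc : y ≠ c)
    (hx1a : x = a + d) (hx1b : x = b + c) (hd2 : d = 2 * y)
    (G0 : y = 2 * a ∨ y = a + a ∨ y = a + b ∨ y = a + c)
    (G1 : y = 2 * b ∨ y = b + a ∨ y = b + b ∨ y = b + c)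
    (G2 : y = 2 * c ∨ y = c + a ∨ y = c + b ∨ y = c + c) : False := by omega

private lemma lem1a (x y a b c d : ℕ) (hyx : y < x) (hab : a < b) (hbc : b < c) (hcd : c < d)
    (py : 0 < y) (pa : 0 < a)
    (hdy : d < y)
    (hx1a : x = a + d) (hx1b : x = b + c)
    (E10 : (y = a + x ∨ a = y + x) ∨
      (y = a + y ∨ a = y + y) ∨
      (y = a + a ∨ a = y + a) ∨
      (y = a + b ∨ a = y + b) ∨
      (y = a + c ∨ a = y + c) ∨
      (y = a + d ∨ a = y + d))
    (E11 : (y = b + x ∨ b = y + x) ∨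
      (y = b + y ∨ b = y + y) ∨
      (y = b + a ∨ b = y + a) ∨
      (y = b + b ∨ b = y + b) ∨
      (y = b + c ∨ b = y + c) ∨
      (y = b + d ∨ b = y + d))
    (E12 : (y = c + x ∨ c = y + x) ∨
      (y = c + y ∨ c = y + y) ∨
      (y = c + a ∨ c = y + a) ∨
      (y = c + b ∨ c = y + b) ∨
      (y = c + c ∨ c = y + c) ∨
      (y = c + d ∨ c = y + d))
    (E13 : (y = d + x ∨ d = y + x) ∨
      (y = d + y ∨ d = y + y) ∨
      (y = d + a ∨ d = y + a) ∨
      (y = d + b ∨ d = y + b) ∨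
      (y = d + c ∨ d = y + c) ∨
      (y = d + d ∨ d = y + d)) : False := by omega

private theorem key24 (f : Fin 2 ⊕ Fin 4 → ℕ) (S : Finset ℕ)
    (hpos : ∀ s ∈ S, 0 < s) (hmem : ∀ v, f v ∈ S) (hinj : Function.Injective f)
    (hadj : ∀ x y : Fin 2 ⊕ Fin 4, x ≠ y →
          (x.isLeft ≠ y.isLeft ↔ ((f x : ℤ) - (f y : ℤ)).natAbs ∈ S))
    (hS : ∀ t, t ∈ S ↔ (t = f (.inl 0) ∨ t = f (.inl 1) ∨ t = f (.inr 0) ∨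
      t = f (.inr 1) ∨ t = f (.inr 2) ∨ t = f (.inr 3)))
    (hyx : f (.inl 1) < f (.inl 0))
    (hab : f (.inr 0) < f (.inr 1)) (hbc : f (.inr 1) < f (.inr 2))
    (hcd : f (.inr 2) < f (.inr 3)) : False := by
  have hmemIff : ∀ u v : ℕ, ((u:ℤ) - (v:ℤ)).natAbs ∈ S ↔
      ((u = v + f (.inl 0) ∨ v = u + f (.inl 0)) ∨
      (u = v + f (.inl 1) ∨ v = u + f (.inl 1)) ∨
      (u = v + f (.inr 0) ∨ v = u + f (.inr 0)) ∨
      (u = v + f (.inr 1) ∨ v = u + f (.inr 1)) ∨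
      (u = v + f (.inr 2) ∨ v = u + f (.inr 2)) ∨
      (u = v + f (.inr 3) ∨ v = u + f (.inr 3))) := by
    intro u v
    rw [hS]
    simp only [natAbs_eq6]
  have hE : ∀ (i : Fin 2) (j : Fin 4),
      ((f (.inl i) : ℤ) - (f (.inr j) : ℤ)).natAbs ∈ S := fun i j =>
    (hadj (.inl i) (.inr j) (by simp)).mp (by simp)
  have E00 := (hmemIff _ _).mp (hE 0 0)
  have E01 := (hmemIff _ _).mp (hE 0 1)
  have E02 := (hmemIff _ _).mp (hE 0 2)
  have E03 := (hmemIff _ _).mp (hE 0 3)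
  have E10 := (hmemIff _ _).mp (hE 1 0)
  have E11 := (hmemIff _ _).mp (hE 1 1)
  have E12 := (hmemIff _ _).mp (hE 1 2)
  have E13 := (hmemIff _ _).mp (hE 1 3)
  have NL : ¬ ((f (.inl 0) = f (.inl 1) + f (.inl 0) ∨ f (.inl 1) = f (.inl 0) + f (.inl 0)) ∨
      (f (.inl 0) = f (.inl 1) + f (.inl 1) ∨ f (.inl 1) = f (.inl 0) + f (.inl 1)) ∨
      (f (.inl 0) = f (.inl 1) + f (.inr 0) ∨ f (.inl 1) = f (.inl 0) + f (.inr 0)) ∨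
      (f (.inl 0) = f (.inl 1) + f (.inr 1) ∨ f (.inl 1) = f (.inl 0) + f (.inr 1)) ∨
      (f (.inl 0) = f (.inl 1) + f (.inr 2) ∨ f (.inl 1) = f (.inl 0) + f (.inr 2)) ∨
      (f (.inl 0) = f (.inl 1) + f (.inr 3) ∨ f (.inl 1) = f (.inl 0) + f (.inr 3))) := by
    intro h
    have := (hadj (.inl 0) (.inl 1) (by simp)).mpr ((hmemIff _ _).mpr h)
    simp at this
  have hNR : ∀ (i j : Fin 4), i ≠ j →
      ((f (.inr i) : ℤ) - (f (.inr j) : ℤ)).natAbs ∉ S := by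
    intro i j hij h
    have := (hadj (.inr i) (.inr j) (by simpa using hij)).mpr h
    simp at this
  have N01 : ¬ ((f (.inr 0) = f (.inr 1) + f (.inl 0) ∨ f (.inr 1) = f (.inr 0) + f (.inl 0)) ∨
      (f (.inr 0) = f (.inr 1) + f (.inl 1) ∨ f (.inr 1) = f (.inr 0) + f (.inl 1)) ∨
      (f (.inr 0) = f (.inr 1) + f (.inr 0) ∨ f (.inr 1) = f (.inr 0) + f (.inr 0)) ∨
      (f (.inr 0) = f (.inr 1) + f (.inr 1) ∨ f (.inr 1) = f (.inr 0) + f (.inr 1)) ∨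
      (f (.inr 0) = f (.inr 1) + f (.inr 2) ∨ f (.inr 1) = f (.inr 0) + f (.inr 2)) ∨
      (f (.inr 0) = f (.inr 1) + f (.inr 3) ∨ f (.inr 1) = f (.inr 0) + f (.inr 3))) :=
    fun h => hNR 0 1 (by decide) ((hmemIff _ _).mpr h)
  have N02 : ¬ ((f (.inr 0) = f (.inr 2) + f (.inl 0) ∨ f (.inr 2) = f (.inr 0) + f (.inl 0)) ∨
      (f (.inr 0) = f (.inr 2) + f (.inl 1) ∨ f (.inr 2) = f (.inr 0) + f (.inl 1)) ∨
      (f (.inr 0) = f (.inr 2) + f (.inr 0) ∨ f (.inr 2) = f (.inr 0) + f (.inr 0)) ∨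
      (f (.inr 0) = f (.inr 2) + f (.inr 1) ∨ f (.inr 2) = f (.inr 0) + f (.inr 1)) ∨
      (f (.inr 0) = f (.inr 2) + f (.inr 2) ∨ f (.inr 2) = f (.inr 0) + f (.inr 2)) ∨
      (f (.inr 0) = f (.inr 2) + f (.inr 3) ∨ f (.inr 2) = f (.inr 0) + f (.inr 3))) :=
    fun h => hNR 0 2 (by decide) ((hmemIff _ _).mpr h)
  have N03 : ¬ ((f (.inr 0) = f (.inr 3) + f (.inl 0) ∨ f (.inr 3) = f (.inr 0) + f (.inl 0)) ∨
      (f (.inr 0) = f (.inr 3) + f (.inl 1) ∨ f (.inr 3) = f (.inr 0) + f (.inl 1)) ∨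
      (f (.inr 0) = f (.inr 3) + f (.inr 0) ∨ f (.inr 3) = f (.inr 0) + f (.inr 0)) ∨
      (f (.inr 0) = f (.inr 3) + f (.inr 1) ∨ f (.inr 3) = f (.inr 0) + f (.inr 1)) ∨
      (f (.inr 0) = f (.inr 3) + f (.inr 2) ∨ f (.inr 3) = f (.inr 0) + f (.inr 2)) ∨
      (f (.inr 0) = f (.inr 3) + f (.inr 3) ∨ f (.inr 3) = f (.inr 0) + f (.inr 3))) :=
    fun h => hNR 0 3 (by decide) ((hmemIff _ _).mpr h)
  have N12 : ¬ ((f (.inr 1) = f (.inr 2) + f (.inl 0) ∨ f (.inr 2) = f (.inr 1) + f (.inl 0)) ∨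
      (f (.inr 1) = f (.inr 2) + f (.inl 1) ∨ f (.inr 2) = f (.inr 1) + f (.inl 1)) ∨
      (f (.inr 1) = f (.inr 2) + f (.inr 0) ∨ f (.inr 2) = f (.inr 1) + f (.inr 0)) ∨
      (f (.inr 1) = f (.inr 2) + f (.inr 1) ∨ f (.inr 2) = f (.inr 1) + f (.inr 1)) ∨
      (f (.inr 1) = f (.inr 2) + f (.inr 2) ∨ f (.inr 2) = f (.inr 1) + f (.inr 2)) ∨
      (f (.inr 1) = f (.inr 2) + f (.inr 3) ∨ f (.inr 2) = f (.inr 1) + f (.inr 3))) :=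
    fun h => hNR 1 2 (by decide) ((hmemIff _ _).mpr h)
  have N13 : ¬ ((f (.inr 1) = f (.inr 3) + f (.inl 0) ∨ f (.inr 3) = f (.inr 1) + f (.inl 0)) ∨
      (f (.inr 1) = f (.inr 3) + f (.inl 1) ∨ f (.inr 3) = f (.inr 1) + f (.inl 1)) ∨
      (f (.inr 1) = f (.inr 3) + f (.inr 0) ∨ f (.inr 3) = f (.inr 1) + f (.inr 0)) ∨
      (f (.inr 1) = f (.inr 3) + f (.inr 1) ∨ f (.inr 3) = f (.inr 1) + f (.inr 1)) ∨
      (f (.inr 1) = f (.inr 3) + f (.inr 2) ∨ f (.inr 3) = f (.inr 1) + f (.inr 2)) ∨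
      (f (.inr 1) = f (.inr 3) + f (.inr 3) ∨ f (.inr 3) = f (.inr 1) + f (.inr 3))) :=
    fun h => hNR 1 3 (by decide) ((hmemIff _ _).mpr h)
  have N23 : ¬ ((f (.inr 2) = f (.inr 3) + f (.inl 0) ∨ f (.inr 3) = f (.inr 2) + f (.inl 0)) ∨
      (f (.inr 2) = f (.inr 3) + f (.inl 1) ∨ f (.inr 3) = f (.inr 2) + f (.inl 1)) ∨
      (f (.inr 2) = f (.inr 3) + f (.inr 0) ∨ f (.inr 3) = f (.inr 2) + f (.inr 0)) ∨
      (f (.inr 2) = f (.inr 3) + f (.inr 1) ∨ f (.inr 3) = f (.inr 2) + f (.inr 1)) ∨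
      (f (.inr 2) = f (.inr 3) + f (.inr 2) ∨ f (.inr 3) = f (.inr 2) + f (.inr 2)) ∨
      (f (.inr 2) = f (.inr 3) + f (.inr 3) ∨ f (.inr 3) = f (.inr 2) + f (.inr 3))) :=
    fun h => hNR 2 3 (by decide) ((hmemIff _ _).mpr h)
  have n03x : ¬ f (.inr 3) = f (.inr 0) + f (.inl 0) := fun h => N03 (Or.inl (Or.inr h))
  have n03y : ¬ f (.inr 3) = f (.inr 0) + f (.inl 1) := fun h => N03 (Or.inr (Or.inl (Or.inr h)))
  have n13x : ¬ f (.inr 3) = f (.inr 1) + f (.inl 0) := fun h => N13 (Or.inl (Or.inr h))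
  have n13y : ¬ f (.inr 3) = f (.inr 1) + f (.inl 1) := fun h => N13 (Or.inr (Or.inl (Or.inr h)))
  have n23x : ¬ f (.inr 3) = f (.inr 2) + f (.inl 0) := fun h => N23 (Or.inl (Or.inr h))
  have n23y : ¬ f (.inr 3) = f (.inr 2) + f (.inl 1) := fun h => N23 (Or.inr (Or.inl (Or.inr h)))
  have n02x : ¬ f (.inr 2) = f (.inr 0) + f (.inl 0) := fun h => N02 (Or.inl (Or.inr h))
  have n02y : ¬ f (.inr 2) = f (.inr 0) + f (.inl 1) := fun h => N02 (Or.inr (Or.inl (Or.inr h)))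
  have n12x : ¬ f (.inr 2) = f (.inr 1) + f (.inl 0) := fun h => N12 (Or.inl (Or.inr h))
  have n12y : ¬ f (.inr 2) = f (.inr 1) + f (.inl 1) := fun h => N12 (Or.inr (Or.inl (Or.inr h)))
  have n01y : ¬ f (.inr 1) = f (.inr 0) + f (.inl 1) := fun h => N01 (Or.inr (Or.inl (Or.inr h)))
  have la : ¬ f (.inl 0) = f (.inl 1) + f (.inr 0) := fun h => NL (Or.inr (Or.inr (Or.inl (Or.inl h))))
  have lb : ¬ f (.inl 0) = f (.inl 1) + f (.inr 1) := fun h => NL (Or.inr (Or.inr (Or.inr (Or.inl (Or.inl h)))))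
  have lc : ¬ f (.inl 0) = f (.inl 1) + f (.inr 2) := fun h => NL (Or.inr (Or.inr (Or.inr (Or.inr (Or.inl (Or.inl h))))))
  have ld : ¬ f (.inl 0) = f (.inl 1) + f (.inr 3) := fun h => NL (Or.inr (Or.inr (Or.inr (Or.inr (Or.inr (Or.inl h))))))
  have py : 0 < f (.inl 1) := hpos _ (hmem (.inl 1))
  have pa : 0 < f (.inr 0) := hpos _ (hmem (.inr 0))
  have pb : 0 < f (.inr 1) := pa.trans hab
  have pc : 0 < f (.inr 2) := pb.trans hbc
  have pd : 0 < f (.inr 3) := pc.trans hcd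
  have dxd : f (.inl 0) ≠ f (.inr 3) := hinj.ne (by simp)
  have dxc : f (.inl 0) ≠ f (.inr 2) := hinj.ne (by simp)
  have dyd : f (.inl 1) ≠ f (.inr 3) := hinj.ne (by simp)
  have dya : f (.inl 1) ≠ f (.inr 0) := hinj.ne (by simp)
  have dyb : f (.inl 1) ≠ f (.inr 1) := hinj.ne (by simp)
  have dyc : f (.inl 1) ≠ f (.inr 2) := hinj.ne (by simp)
  rcases lt_or_gt_of_ne dxd with hxd | hdx
  · have hd2 := lemL2d _ _ _ _ _ _ hyx hab hbc hcd py pa hxd E03 E13 n03x n13x n23x n03y n13y n23y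
    rcases lt_or_gt_of_ne dxc with hxc | hcx
    · exact lem2a _ _ _ _ _ _ hyx hab hbc hcd py pa hxc hd2 E02 E12 n02x n12x n02y n12y
    · obtain ⟨hx2a, hx2b⟩ :=
        lem2b1 _ _ _ _ _ _ hyx hab hbc hcd py pa hcx hxd E00 E01 E02 la lb lc
      have F10 := lemF _ _ _ _ _ _ _ hyx hab hbc hcd py pa pa (hab.trans hbc).le hcx hxd E10
      have F11 := lemF _ _ _ _ _ _ _ hyx hab hbc hcd py pa pb hbc.le hcx hxd E11
      have F12 := lemF _ _ _ _ _ _ _ hyx hab hbc hcd py pa pc le_rfl hcx hxd E12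
      exact lem2b2 _ _ _ _ _ _ hyx hab hbc hcd py pa hcx dya dyb dyc hx2a hx2b
        F10 F11 F12 n01y n02y n12y
  · have H00 := lemH _ _ _ _ _ _ _ hyx hab hbc hcd py pa pa ((hab.trans hbc).trans hcd).le hdx la E00
    have H01 := lemH _ _ _ _ _ _ _ hyx hab hbc hcd py pa pb (hbc.trans hcd).le hdx lb E01
    have H02 := lemH _ _ _ _ _ _ _ hyx hab hbc hcd py pa pc hcd.le hdx lc E02
    have H03 := lemH _ _ _ _ _ _ _ hyx hab hbc hcd py pa pd le_rfl hdx ld E03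
    obtain ⟨hx1a, hx1b⟩ := lemhx1 _ _ _ _ _ _ hyx hab hbc hcd py pa hdx H00 H01 H02 H03
    rcases lt_or_gt_of_ne dyd with hyd | hdy
    · have hd2 := lem1bd _ _ _ _ _ _ hyx hab hbc hcd py pa hyd hdx E13 n03y n13y n23y
      have G0 := lemG0 _ _ _ _ _ _ hyx hab hbc hcd py pa hdx hd2 E10
      have G1 := lemG1 _ _ _ _ _ _ hyx hab hbc hcd py pa hdx hd2 E11 n01y
      have G2 := lemG2 _ _ _ _ _ _ hyx hab hbc hcd py pa hdx hd2 E12 n02y n12y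
      exact lem1b2 _ _ _ _ _ _ hyx hab hbc hcd py pa hdx dya dyb dyc hx1a hx1b hd2 G0 G1 G2
    · exact lem1a _ _ _ _ _ _ hyx hab hbc hcd py pa hdy hx1a hx1b E10 E11 E12 E13

/-- `K_{2,4}` (parts `Fin 2` and `Fin 4`, with `x` adjacent to `y` iff they lie
in different parts) is not a difference graph: there is no bijective labeling
by a 6-element set `S` of positive integers such that adjacency corresponds
exactly to the absolute difference of labels lying in `S`. -/
theorem stmt_14 :
    ¬ ∃ (f : Fin 2 ⊕ Fin 4 → ℕ) (S : Finset ℕ),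
        (∀ s ∈ S, 0 < s) ∧ S.card = 6 ∧ (∀ v, f v ∈ S) ∧
        Function.Injective f ∧
        ∀ x y : Fin 2 ⊕ Fin 4, x ≠ y →
          (x.isLeft ≠ y.isLeft ↔ ((f x : ℤ) - (f y : ℤ)).natAbs ∈ S) := by
  rintro ⟨f, S, hpos, hcard, hmem, hinj, hadj⟩
  have himg : Finset.image f Finset.univ = S := by
    apply Finset.eq_of_subset_of_card_le
    · intro t ht
      rcases Finset.mem_image.mp ht with ⟨v, _, rfl⟩
      exact hmem v
    · rw [Finset.card_image_of_injective _ hinj]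
      simp [hcard]
  have hsur : ∀ t, t ∈ S → ∃ v, f v = t := by
    intro t ht
    rw [← himg] at ht
    obtain ⟨v, -, rfl⟩ := Finset.mem_image.mp ht
    exact ⟨v, rfl⟩
  have hginj : Function.Injective (fun j : Fin 4 => f (.inr j)) := by
    intro i j h
    have := hinj h
    simpa using this
  obtain ⟨σ₁, hσ₁⟩ : ∃ σ₁ : Equiv.Perm (Fin 2), f (.inl (σ₁ 1)) < f (.inl (σ₁ 0)) := by
    rcases lt_or_gt_of_ne
      (hinj.ne (show (Sum.inl 0 : Fin 2 ⊕ Fin 4) ≠ .inl 1 by simp)) with h | h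
    · exact ⟨Equiv.swap 0 1, by simpa using h⟩
    · exact ⟨Equiv.refl _, by simpa using h⟩
  set τ : Equiv.Perm (Fin 4) := Tuple.sort (fun j : Fin 4 => f (.inr j)) with hτ
  have hsm : StrictMono ((fun j : Fin 4 => f (.inr j)) ∘ τ) :=
    (Tuple.monotone_sort _).strictMono_of_injective (hginj.comp τ.injective)
  set σ : (Fin 2 ⊕ Fin 4) ≃ (Fin 2 ⊕ Fin 4) := Equiv.sumCongr σ₁ τ with hσ
  have hLeft : ∀ w : Fin 2 ⊕ Fin 4, (σ w).isLeft = w.isLeft := by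
    rintro (i | j) <;> simp [hσ]
  refine key24 (f ∘ σ) S hpos (fun v => hmem _) (hinj.comp σ.injective) ?_ ?_ ?_ ?_ ?_ ?_
  · intro u v huv
    have h2 := hadj (σ u) (σ v) (fun h => huv (σ.injective h))
    rw [hLeft u, hLeft v] at h2
    exact h2
  · intro t
    constructor
    · intro ht
      obtain ⟨v, rfl⟩ := hsur t ht
      obtain ⟨w, rfl⟩ : ∃ w, σ w = v := ⟨σ.symm v, by simp⟩
      rcases w with i | j
      · fin_cases i
        · exact Or.inl rfl
        · exact Or.inr (Or.inl rfl)
      · fin_cases j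
        · exact Or.inr (Or.inr (Or.inl rfl))
        · exact Or.inr (Or.inr (Or.inr (Or.inl rfl)))
        · exact Or.inr (Or.inr (Or.inr (Or.inr (Or.inl rfl))))
        · exact Or.inr (Or.inr (Or.inr (Or.inr (Or.inr rfl))))
    · rintro (h|h|h|h|h|h) <;> rw [h] <;> exact hmem _
  · exact hσ₁
  · exact hsm (show (0:Fin 4) < 1 by decide)
  · exact hsm (show (1:Fin 4) < 2 by decide)
  · exact hsm (show (2:Fin 4) < 3 by decide)
end

section
/- If the center of a star S_n with an even number n of leaves carries the maximum label a of the signature S, then for every leaf label b, the value a − b is also a leaf label and b ≠ a/2; that is, the leaf labels can be partitioned into pairs {b, a − b} with b ≠ a − b. -/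
/-- A fixed-point-free involution on a finite set forces even cardinality. -/
lemma even_card_of_involution (T : Finset ℕ) (g : ℕ → ℕ)
    (hg : ∀ c ∈ T, g c ∈ T) (hinv : ∀ c ∈ T, g (g c) = c)
    (hne : ∀ c ∈ T, g c ≠ c) : Even T.card := by
  induction T using Finset.strongInduction with
  | _ T ih =>
    rcases T.eq_empty_or_nonempty with rfl | ⟨c, hc⟩
    · simp
    · have hgc : g c ∈ T := hg c hc
      have hnec : g c ≠ c := hne c hc
      set T' := (T.erase c).erase (g c) with hT'
      have hsub : T' ⊂ T := by
        refine Finset.ssubset_of_subset_of_ssubset ?_ (Finset.erase_ssubset hc)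
        exact Finset.erase_subset _ _
      have hmemT' : ∀ d, d ∈ T' ↔ d ∈ T ∧ d ≠ c ∧ d ≠ g c := by
        intro d
        simp only [hT', Finset.mem_erase]
        tauto
      have hg' : ∀ d ∈ T', g d ∈ T' := by
        intro d hd
        rw [hmemT'] at hd ⊢
        obtain ⟨hdT, hdc, hdgc⟩ := hd
        refine ⟨hg d hdT, ?_, ?_⟩
        · intro h
          apply hdgc
          have := hinv d hdT
          rw [h] at this
          exact this.symm
        · intro h
          apply hdc
          have h1 := hinv d hdT
          have h2 := hinv c hc
          rw [h] at h1
          rw [h2] at h1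
          exact h1.symm
      have hinv' : ∀ d ∈ T', g (g d) = d := fun d hd =>
        hinv d ((hmemT' d).mp hd).1
      have hne' : ∀ d ∈ T', g d ≠ d := fun d hd =>
        hne d ((hmemT' d).mp hd).1
      have hcard : T.card = T'.card + 2 := by
        have h1 : g c ∈ T.erase c := Finset.mem_erase.mpr ⟨hnec, hgc⟩
        have h2 : T'.card = (T.erase c).card - 1 := Finset.card_erase_of_mem h1
        have h3 : (T.erase c).card = T.card - 1 := Finset.card_erase_of_mem hc
        have h4 : 1 ≤ (T.erase c).card := Finset.card_pos.mpr ⟨g c, h1⟩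
        have h5 : 1 ≤ T.card := Finset.card_pos.mpr ⟨c, hc⟩
        omega
      rw [hcard]
      exact (ih T' hsub hg' hinv' hne').add (by norm_num)

/-- If the center (vertex `0`) of a star with an even number `n` of leaves
carries the maximum label `a` of the signature `S`, then for every leaf label
`b` the value `a − b` is also a leaf label, and `b ≠ a/2` (i.e. `2b ≠ a`):
the leaf labels pair off into pairs `{b, a − b}`. -/
theorem stmt_17 (n : ℕ) (hpos : 1 ≤ n) (hn : Even n) (S : Finset ℕ)
    (hS : S.Nonempty) (f : Fin (n + 1) → ℕ) (hposS : ∀ s ∈ S, 0 < s)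
    (hmem : ∀ v, f v ∈ S) (hinj : Function.Injective f)
    (hsurj : ∀ s ∈ S, ∃ v, f v = s)
    (hadj : ∀ x y : Fin (n + 1), x ≠ y →
      ((x = 0 ∨ y = 0) ↔ ((f x : ℤ) - (f y : ℤ)).natAbs ∈ S))
    (hmax : f 0 = S.max' hS) :
    ∀ i : Fin (n + 1), i ≠ 0 →
      (∃ i' : Fin (n + 1), i' ≠ 0 ∧ (f i' : ℤ) = (f 0 : ℤ) - (f i : ℤ)) ∧
      2 * f i ≠ f 0 := by
  set a := f 0 with ha
  clear_value a
  -- basic facts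
  have haS : a ∈ S := by rw [ha]; exact hmem 0
  have hle : ∀ s ∈ S, s ≤ a := by
    intro s hs; rw [hmax]; exact S.le_max' s hs
  -- for any label c ∈ S with c ≠ a, a - c is a label distinct from a
  have key : ∀ c ∈ S, c ≠ a → (a - c ∈ S ∧ a - c ≠ a) := by
    intro c hcS hca
    obtain ⟨v, hv⟩ := hsurj c hcS
    have hv0 : v ≠ 0 := by
      intro h; apply hca; rw [← hv, h, ← ha]
    have hadj0 := (hadj 0 v (Ne.symm hv0)).mp (Or.inl rfl)
    have hcle : c ≤ a := hle c hcS
    have habs : ((f 0 : ℤ) - (f v : ℤ)).natAbs = a - c := by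
      rw [hv, ← ha]
      omega
    rw [habs] at hadj0
    have hcpos : 0 < c := hposS c hcS
    exact ⟨hadj0, by omega⟩
  -- S has cardinality n + 1
  have hScard : S.card = n + 1 := by
    have h1 : S = Finset.univ.image f := by
      apply Finset.Subset.antisymm
      · intro s hs
        obtain ⟨v, hv⟩ := hsurj s hs
        exact Finset.mem_image.mpr ⟨v, Finset.mem_univ v, hv⟩
      · intro s hs
        obtain ⟨v, _, hv⟩ := Finset.mem_image.mp hs
        rw [← hv]; exact hmem v
    rw [h1, Finset.card_image_of_injective _ hinj]
    simp
  intro i hi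
  set b := f i with hb
  clear_value b
  have hbS : b ∈ S := by rw [hb]; exact hmem i
  have hba : b ≠ a := by intro h; rw [hb, ha] at h; exact hi (hinj h)
  obtain ⟨habS, haba⟩ := key b hbS hba
  have hbpos : 0 < b := hposS b hbS
  have hble : b ≤ a := hle b hbS
  constructor
  · obtain ⟨i', hi'⟩ := hsurj (a - b) habS
    refine ⟨i', ?_, ?_⟩
    · intro h; apply haba; rw [← hi', h, ← ha]
    · rw [hi']
      have : (↑(a - b) : ℤ) = (a : ℤ) - (b : ℤ) := by
        push_cast [Nat.cast_sub hble]; ring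
      rw [this]
  · -- suppose 2 * b = a; derive contradiction via parity
    intro h2b
    -- the set of leaf labels other than b
    set T := (S.erase a).erase b with hT
    have hbT : b ∈ S.erase a := Finset.mem_erase.mpr ⟨hba, hbS⟩
    have haT : a ∈ S := haS
    have hTcard : T.card = n - 1 := by
      rw [hT, Finset.card_erase_of_mem hbT, Finset.card_erase_of_mem haS, hScard]
      omega
    have hmemT : ∀ c, c ∈ T ↔ c ∈ S ∧ c ≠ a ∧ c ≠ b := by
      intro c
      simp only [hT, Finset.mem_erase]
      tauto
    -- g c = a - c is a fixed-point-free involution on T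
    have heven := even_card_of_involution T (fun c => a - c)
      (by
        intro c hc
        show a - c ∈ T
        rw [hmemT] at hc ⊢
        obtain ⟨hcS, hca, hcb⟩ := hc
        obtain ⟨h1, h2⟩ := key c hcS hca
        refine ⟨h1, h2, ?_⟩
        have hcle : c ≤ a := hle c hcS
        omega)
      (by
        intro c hc
        show a - (a - c) = c
        rw [hmemT] at hc
        have := hle c hc.1
        omega)
      (by
        intro c hc
        show a - c ≠ c
        rw [hmemT] at hc
        obtain ⟨hcS, hca, hcb⟩ := hc
        have := hle c hcS
        omega)
    rw [hTcard] at heven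
    obtain ⟨k, hk⟩ := hn
    obtain ⟨m, hm⟩ := heven
    omega
end
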